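/- arXiv:math/0511347 — 7 statements merged into one kernel-verified Lean document; each statement's English description precedes it below -/
import Mathlib

section
/- Let E be a real Banach space and a < b real numbers. Let L : ℝ × E × E → ℝ be continuously Fréchet differentiable. Then for every x, h ∈ C¹([a,b];E), the real function s ↦ ∫_a^b L(t, x(t) + s·h(t), ẋ(t) + s·ḣ(t)) dt is differentiable at s = 0, and its derivative there equals ∫_a^b [ D_xL(t,x(t),ẋ(t))(h(t)) + D_vL(t,x(t),ẋ(t))(ḣ(t)) ] dt. -/
/-!
Differentiating under the integral sign: along the line `s ↦ (t, x t, x' t) + s • (0, h t, h' t)`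
the integrand has `s`-derivative `DL(t, x + s h, ẋ + s ḣ)(0, h, ḣ)`, which is jointly continuous in
`(t, s)` on a compact rectangle and hence uniformly bounded, so dominated convergence applies.
Evaluating `DL` at a vector with vanishing time component splits it into the two partial derivatives.
-/

open Set Metric

theorem fderiv_apply_zero_prod_prod {𝕜 : Type*} [NontriviallyNormedField 𝕜]
    {E₁ E₂ E₃ G : Type*} [NormedAddCommGroup E₁] [NormedSpace 𝕜 E₁]
    [NormedAddCommGroup E₂] [NormedSpace 𝕜 E₂] [NormedAddCommGroup E₃] [NormedSpace 𝕜 E₃]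
    [NormedAddCommGroup G] [NormedSpace 𝕜 G]
    {L : E₁ × E₂ × E₃ → G} {t : E₁} {u : E₂} {v : E₃} (hL : DifferentiableAt 𝕜 L (t, u, v))
    (p : E₂) (q : E₃) :
    fderiv 𝕜 L (t, u, v) (0, p, q)
      = fderiv 𝕜 (fun y => L (t, y, v)) u p + fderiv 𝕜 (fun w => L (t, u, w)) v q := by
  have hu : HasFDerivAt (fun y => L (t, y, v))
      ((fderiv 𝕜 L (t, u, v)).comp
        ((ContinuousLinearMap.inr 𝕜 E₁ (E₂ × E₃)).comp (ContinuousLinearMap.inl 𝕜 E₂ E₃))) u :=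
    hL.hasFDerivAt.comp u ((hasFDerivAt_prodMk_right t (u, v)).comp u (hasFDerivAt_prodMk_left u v))
  have hv : HasFDerivAt (fun w => L (t, u, w))
      ((fderiv 𝕜 L (t, u, v)).comp
        ((ContinuousLinearMap.inr 𝕜 E₁ (E₂ × E₃)).comp (ContinuousLinearMap.inr 𝕜 E₂ E₃))) v :=
    hL.hasFDerivAt.comp v ((hasFDerivAt_prodMk_right t (u, v)).comp v (hasFDerivAt_prodMk_right u v))
  rw [hu.fderiv, hv.fderiv]
  simp only [ContinuousLinearMap.comp_apply, ContinuousLinearMap.inl_apply,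
    ContinuousLinearMap.inr_apply, ← map_add, Prod.mk_add_mk, add_zero, zero_add]

theorem hasDerivAt_intervalIntegral_of_continuousOn_deriv
    {G : Type*} [NormedAddCommGroup G] [NormedSpace ℝ G] [CompleteSpace G]
    {F F' : ℝ → ℝ → G} {a b s₀ : ℝ} (hab : a ≤ b)
    (hF : ∀ s ∈ ball s₀ 1, ContinuousOn (F s) (Icc a b))
    (hF' : ContinuousOn (Function.uncurry F') (closedBall s₀ 1 ×ˢ Icc a b))
    (hdiff : ∀ t ∈ Icc a b, ∀ s ∈ ball s₀ 1, HasDerivAt (F · t) (F' s t) s) :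
    HasDerivAt (fun s => ∫ t in a..b, F s t) (∫ t in a..b, F' s₀ t) s₀ := by
  obtain ⟨M, hM⟩ := ((isCompact_closedBall s₀ 1).prod isCompact_Icc).exists_bound_of_continuousOn hF'
  have hIoc : uIoc a b ⊆ Icc a b := uIoc_of_le hab ▸ Ioc_subset_Icc_self
  have hs₀ : s₀ ∈ ball s₀ 1 := mem_ball_self one_pos
  have hF's₀ : ContinuousOn (F' s₀) (Icc a b) :=
    hF'.comp (continuousOn_const.prodMk continuousOn_id) fun t ht => ⟨ball_subset_closedBall hs₀, ht⟩
  refine (intervalIntegral.hasDerivAt_integral_of_dominated_loc_of_deriv_le (bound := fun _ => M)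
    (ball_mem_nhds s₀ one_pos) ?_ ((hF s₀ hs₀).intervalIntegrable_of_Icc hab)
    ((hF's₀.mono hIoc).aestronglyMeasurable measurableSet_uIoc) ?_ intervalIntegrable_const ?_).2
  · filter_upwards [ball_mem_nhds s₀ one_pos] with s hs
    exact ((hF s hs).mono hIoc).aestronglyMeasurable measurableSet_uIoc
  · exact .of_forall fun t ht s hs => hM (s, t) ⟨ball_subset_closedBall hs, hIoc ht⟩
  · exact .of_forall fun t ht s hs => hdiff t (hIoc ht) s hs

theorem hasDerivAt_intervalIntegral_comp_add_smul
    {F G : Type*} [NormedAddCommGroup F] [NormedSpace ℝ F]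
    [NormedAddCommGroup G] [NormedSpace ℝ G] [CompleteSpace G]
    {L : F → G} (hL : ContDiff ℝ 1 L) {p d : ℝ → F} {a b : ℝ} (hab : a ≤ b)
    (hp : ContinuousOn p (Icc a b)) (hd : ContinuousOn d (Icc a b)) :
    HasDerivAt (fun s : ℝ => ∫ t in a..b, L (p t + s • d t))
      (∫ t in a..b, fderiv ℝ L (p t) (d t)) 0 := by
  have hline : ContinuousOn (fun q : ℝ × ℝ => p q.2 + q.1 • d q.2) (univ ×ˢ Icc a b) :=
    (hp.comp continuousOn_snd fun q hq => hq.2).add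
      (continuousOn_fst.smul (hd.comp continuousOn_snd fun q hq => hq.2))
  have key := hasDerivAt_intervalIntegral_of_continuousOn_deriv (s₀ := 0)
    (F := fun s t => L (p t + s • d t)) (F' := fun s t => fderiv ℝ L (p t + s • d t) (d t)) hab
    (fun s _ => hL.continuous.comp_continuousOn (hp.add (continuousOn_const.smul hd)))
    (((hL.continuous_fderiv one_ne_zero).comp_continuousOn hline).clm_apply
      (hd.comp continuousOn_snd fun q hq => hq.2) |>.mono (prod_mono (subset_univ _) le_rfl))
    (fun t _ s _ => (hL.differentiable one_ne_zero _).hasFDerivAt.comp_hasDerivAt s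
      (by simpa using ((hasDerivAt_id' s).smul_const (d t)).const_add (p t)))
  simpa using key

theorem first_variation_general
    {E : Type*} [NormedAddCommGroup E] [NormedSpace ℝ E]
    (a b : ℝ) (hab : a < b)
    (L : ℝ × E × E → ℝ) (hL : ContDiff ℝ 1 L)
    (x x' h h' : ℝ → E)
    (hx : ∀ t ∈ Set.Icc a b, HasDerivWithinAt x (x' t) (Set.Icc a b) t)
    (hx' : ContinuousOn x' (Set.Icc a b))
    (hh : ∀ t ∈ Set.Icc a b, HasDerivWithinAt h (h' t) (Set.Icc a b) t)
    (hh' : ContinuousOn h' (Set.Icc a b)) :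
    HasDerivAt
      (fun s : ℝ => ∫ t in a..b, L (t, x t + s • h t, x' t + s • h' t))
      (∫ t in a..b,
        fderiv ℝ (fun y => L (t, y, x' t)) (x t) (h t)
          + fderiv ℝ (fun v => L (t, x t, v)) (x' t) (h' t)) 0 := by
  have hxc : ContinuousOn x (Icc a b) := fun t ht => (hx t ht).continuousWithinAt
  have hhc : ContinuousOn h (Icc a b) := fun t ht => (hh t ht).continuousWithinAt
  have key := hasDerivAt_intervalIntegral_comp_add_smul hL hab.le
    (p := fun t => (t, x t, x' t)) (d := fun t => (0, h t, h' t))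
    (continuousOn_id.prodMk (hxc.prodMk hx')) (continuousOn_const.prodMk (hhc.prodMk hh'))
  simp only [Prod.smul_mk, smul_zero, Prod.mk_add_mk, add_zero] at key
  refine key.congr_deriv (intervalIntegral.integral_congr fun t _ => ?_)
  exact fderiv_apply_zero_prod_prod ((hL.differentiable one_ne_zero) _) (h t) (h' t)

/-- **First variation formula.**
Let `E` be a real Banach space, `a < b`, and `L : ℝ × E × E → ℝ` continuously
Fréchet differentiable. For every `x, h ∈ C¹([a,b];E)` (represented by the
curves together with their derivatives `x'`, `h'`), the function
`s ↦ ∫_a^b L(t, x(t) + s•h(t), ẋ(t) + s•ḣ(t)) dt` is differentiable at `s = 0`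
with derivative `∫_a^b [D_x L(t,x,ẋ)(h) + D_v L(t,x,ẋ)(ḣ)] dt`. -/
theorem first_variation
    {E : Type*} [NormedAddCommGroup E] [NormedSpace ℝ E] [CompleteSpace E]
    (a b : ℝ) (hab : a < b)
    (L : ℝ × E × E → ℝ) (hL : ContDiff ℝ 1 L)
    (x x' h h' : ℝ → E)
    (hx : ∀ t ∈ Set.Icc a b, HasDerivWithinAt x (x' t) (Set.Icc a b) t)
    (hx' : ContinuousOn x' (Set.Icc a b))
    (hh : ∀ t ∈ Set.Icc a b, HasDerivWithinAt h (h' t) (Set.Icc a b) t)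
    (hh' : ContinuousOn h' (Set.Icc a b)) :
    HasDerivAt
      (fun s : ℝ => ∫ t in a..b, L (t, x t + s • h t, x' t + s • h' t))
      (∫ t in a..b,
        fderiv ℝ (fun y => L (t, y, x' t)) (x t) (h t)
          + fderiv ℝ (fun v => L (t, x t, v)) (x' t) (h' t)) 0 :=
  first_variation_general a b hab L hL x x' h h' hx hx' hh hh'
end

section
/- Let E be a real Banach space, a < b, and L : ℝ × E × E → ℝ twice continuously Fréchet differentiable. Suppose x ∈ C¹([a,b];E) is a local minimizer (in the C¹ norm) of J[y] = ∫_a^b L(t,y(t),ẏ(t)) dt among curves with the same endpoint values. Then x satisfies the Legendre condition: for every t ∈ [a,b] and every w ∈ E, D²_vvL(t,x(t),ẋ(t))(w,w) ≥ 0. -/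
/-!
Perturbing `x` by `s • φ` with `φ(a) = φ(b) = 0`, the minimality of `x` makes `s = 0` a local
minimum of `s ↦ J[x + s • φ]`. A second-order Taylor expansion of `L`, uniform in `t` by
compactness, turns this into nonnegativity of the second variation
`∫ D²L(t, x, ẋ)((0, φ, φ'), (0, φ, φ')) dt`. For `φ(t) = h ψ((t - t₀) / h) • w` with a fixed bump
`ψ`, the `(φ', φ')` term equals `h ∫ ψ'² · D²_vv L(t₀, x(t₀), ẋ(t₀))(w, w) + o(h)` while all the
other terms are `O(h²)`; dividing by `h` and letting `h → 0` gives the Legendre condition at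
interior points `t₀`, and continuity extends it to `[a, b]`.
-/

open Set Filter Topology MeasureTheory Function

lemma abs_sub_sub_mul_le_of_hasDerivAt {f f' : ℝ → ℝ} {r A K σ : ℝ}
    (hf : ∀ τ ∈ Icc (-r) r, HasDerivAt f (f' τ) τ) (hK : ∀ τ ∈ Icc (-r) r, |f' τ - A| ≤ K)
    (hσ : σ ∈ Icc (-r) r) :
    |f σ - f 0 - σ * A| ≤ K * |σ| := by
  have h0 : (0 : ℝ) ∈ Icc (-r) r := ⟨by linarith [hσ.1, hσ.2], by linarith [hσ.1, hσ.2]⟩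
  have hg : ∀ τ ∈ Icc (-r) r,
      HasDerivWithinAt (fun τ => f τ - τ * A) (f' τ - A) (Icc (-r) r) τ := fun τ hτ => by
    have := (hf τ hτ).sub ((hasDerivAt_id' τ).mul_const A)
    rw [one_mul] at this
    exact this.hasDerivWithinAt
  have := (convex_Icc (-r) r).norm_image_sub_le_of_norm_hasDerivWithin_le hg hK h0 hσ
  simp only [Real.norm_eq_abs, zero_mul, sub_zero] at this
  rwa [sub_right_comm]

lemma abs_second_diff_sub_le_of_hasDerivAt {f f' f'' : ℝ → ℝ} {s K : ℝ}
    (hf : ∀ σ, HasDerivAt f (f' σ) σ) (hf' : ∀ σ, HasDerivAt f' (f'' σ) σ)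
    (hK : ∀ σ ∈ Icc (-|s|) |s|, |f'' σ - f'' 0| ≤ K) :
    |f s + f (-s) - 2 * f 0 - s ^ 2 * f'' 0| ≤ 2 * K * s ^ 2 := by
  have hf'_lin : ∀ σ ∈ Icc (-|s|) |s|, |f' σ - f' 0 - σ * f'' 0| ≤ K * |s| := fun σ hσ =>
    (abs_sub_sub_mul_le_of_hasDerivAt (fun τ _ => hf' τ) hK hσ).trans <|
      mul_le_mul_of_nonneg_left (abs_le.2 hσ) ((abs_nonneg _).trans (hK 0 (by simp)))
  have hχ : ∀ σ, HasDerivAt (fun σ => f σ + f (-σ) - σ ^ 2 * f'' 0)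
      (f' σ - f' (-σ) - 2 * σ * f'' 0) σ := fun σ => by
    have := ((hf σ).add ((hf (-σ)).comp σ (hasDerivAt_neg σ))).sub
      ((hasDerivAt_pow 2 σ).mul_const (f'' 0))
    exact this.congr_deriv (by simp only [Nat.cast_ofNat]; ring)
  have hχ' : ∀ σ ∈ Icc (-|s|) |s|, |f' σ - f' (-σ) - 2 * σ * f'' 0 - 0| ≤ 2 * K * |s| := by
    intro σ hσ
    have hσ' : -σ ∈ Icc (-|s|) |s| := ⟨neg_le_neg hσ.2, by linarith [hσ.1]⟩
    calc _ = |(f' σ - f' 0 - σ * f'' 0) - (f' (-σ) - f' 0 - -σ * f'' 0)| := by ring_nf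
      _ ≤ |f' σ - f' 0 - σ * f'' 0| + |f' (-σ) - f' 0 - -σ * f'' 0| := abs_sub _ _
      _ ≤ 2 * K * |s| := by linarith [hf'_lin σ hσ, hf'_lin (-σ) hσ']
  have := abs_sub_sub_mul_le_of_hasDerivAt (fun τ _ => hχ τ) hχ' ⟨neg_abs_le s, le_abs_self s⟩
  calc _ = |f s + f (-s) - s ^ 2 * f'' 0 - (f 0 + f (-0) - 0 ^ 2 * f'' 0) - s * 0| := by
        simp only [neg_zero]; ring_nf
    _ ≤ 2 * K * |s| * |s| := this
    _ = 2 * K * s ^ 2 := by rw [mul_assoc, abs_mul_abs_self, sq]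

section SecondVariation

variable {X : Type*} [NormedAddCommGroup X] [NormedSpace ℝ X]

lemma hasDerivAt_comp_add_smul {Y : Type*} [NormedAddCommGroup Y] [NormedSpace ℝ Y] {G : X → Y}
    {c ξ : X} {σ : ℝ} (hG : DifferentiableAt ℝ G (c + σ • ξ)) :
    HasDerivAt (fun σ : ℝ => G (c + σ • ξ)) (fderiv ℝ G (c + σ • ξ) ξ) σ :=
  hG.hasFDerivAt.comp_hasDerivAt σ (by simpa using ((hasDerivAt_id σ).smul_const ξ).const_add c)

lemma hasDerivAt_fderiv_comp_add_smul_apply {F : X → ℝ} {c ξ : X} {σ : ℝ}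
    (hF : DifferentiableAt ℝ (fderiv ℝ F) (c + σ • ξ)) :
    HasDerivAt (fun σ : ℝ => fderiv ℝ F (c + σ • ξ) ξ)
      (fderiv ℝ (fderiv ℝ F) (c + σ • ξ) ξ ξ) σ := by
  simpa using (hasDerivAt_comp_add_smul hF).clm_apply (hasDerivAt_const σ ξ)

lemma abs_second_diff_sub_le {F : X → ℝ} (hF : ContDiff ℝ 2 F) (c ξ : X) {s K : ℝ}
    (hK : ∀ σ ∈ Icc (-|s|) |s|,
      |fderiv ℝ (fderiv ℝ F) (c + σ • ξ) ξ ξ - fderiv ℝ (fderiv ℝ F) c ξ ξ| ≤ K) :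
    |F (c + s • ξ) + F (c + (-s) • ξ) - 2 * F c - s ^ 2 * fderiv ℝ (fderiv ℝ F) c ξ ξ|
      ≤ 2 * K * s ^ 2 := by
  have := abs_second_diff_sub_le_of_hasDerivAt (f := fun σ => F (c + σ • ξ))
    (fun σ => hasDerivAt_comp_add_smul (hF.differentiable (by norm_num) _))
    (fun σ => hasDerivAt_fderiv_comp_add_smul_apply
      ((hF.fderiv_right (m := 1) (by norm_num)).differentiable one_ne_zero _))
    (by simpa only [zero_smul, add_zero] using hK)
  simpa only [zero_smul, add_zero] using this

lemma eventually_forall_abs_fderiv_fderiv_sub_le {F : X → ℝ} (hF : ContDiff ℝ 2 F) {a b : ℝ}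
    {c ξ : ℝ → X} (hc : ContinuousOn c (Icc a b)) (hξ : ContinuousOn ξ (Icc a b)) {K : ℝ}
    (hK : 0 < K) :
    ∀ᶠ s in 𝓝 (0 : ℝ), ∀ t ∈ Icc a b, ∀ σ ∈ Icc (-|s|) |s|,
      |fderiv ℝ (fderiv ℝ F) (c t + σ • ξ t) (ξ t) (ξ t)
        - fderiv ℝ (fderiv ℝ F) (c t) (ξ t) (ξ t)| ≤ K := by
  set q : ℝ → ℝ → ℝ := fun σ t => fderiv ℝ (fderiv ℝ F) (c t + σ • ξ t) (ξ t) (ξ t)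
  have hq : ContinuousOn (↿q) (Icc (-1) 1 ×ˢ Icc a b) := by
    have hξ' : ContinuousOn (fun p : ℝ × ℝ => ξ p.2) (Icc (-1) 1 ×ˢ Icc a b) :=
      hξ.comp continuousOn_snd fun p hp => hp.2
    exact (((hF.fderiv_right (m := 1) (by norm_num)).continuous_fderiv
      one_ne_zero).comp_continuousOn ((hc.comp continuousOn_snd fun p hp => hp.2).add
      (continuousOn_fst.smul hξ'))).clm_apply hξ' |>.clm_apply hξ'
  have hq_unif : TendstoUniformlyOn q (q 0) (𝓝 0) (Icc a b) := by
    have := ((isCompact_Icc.prod isCompact_Icc).uniformContinuousOn_of_continuous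
      hq).tendstoUniformlyOn (x := (0 : ℝ)) ⟨by norm_num, by norm_num⟩
    rwa [nhdsWithin_eq_nhds.2 (Icc_mem_nhds (by norm_num) (by norm_num))] at this
  obtain ⟨δ, hδ, hqδ⟩ := Metric.eventually_nhds_iff.1 (Metric.tendstoUniformlyOn_iff.1 hq_unif K hK)
  refine Metric.eventually_nhds_iff.2 ⟨δ, hδ, fun s hs t ht σ hσ => ?_⟩
  have hσδ : dist σ 0 < δ := by
    rw [Real.dist_0_eq_abs] at hs ⊢
    exact (abs_le.2 hσ).trans_lt hs
  have := (hqδ hσδ t ht).le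
  rw [Real.dist_eq, abs_sub_comm] at this
  simpa only [q, zero_smul, add_zero] using this

lemma abs_integral_second_diff_sub_le {F : X → ℝ} (hF : ContDiff ℝ 2 F) {a b : ℝ} (hab : a ≤ b)
    {c ξ : ℝ → X} (hc : ContinuousOn c (Icc a b)) (hξ : ContinuousOn ξ (Icc a b)) {s K : ℝ}
    (hK : ∀ t ∈ Icc a b, ∀ σ ∈ Icc (-|s|) |s|,
      |fderiv ℝ (fderiv ℝ F) (c t + σ • ξ t) (ξ t) (ξ t)
        - fderiv ℝ (fderiv ℝ F) (c t) (ξ t) (ξ t)| ≤ K) :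
    |(∫ t in a..b, F (c t + s • ξ t)) + (∫ t in a..b, F (c t + (-s) • ξ t))
      - 2 * (∫ t in a..b, F (c t)) - s ^ 2 * ∫ t in a..b, fderiv ℝ (fderiv ℝ F) (c t) (ξ t) (ξ t)|
      ≤ 2 * K * s ^ 2 * (b - a) := by
  have hline : ∀ σ : ℝ, IntervalIntegrable (fun t => F (c t + σ • ξ t)) volume a b := fun σ =>
    (hF.continuous.comp_continuousOn (hc.add (hξ.const_smul σ))).intervalIntegrable_of_Icc hab
  have hF₀ : IntervalIntegrable (fun t => F (c t)) volume a b := by simpa using hline 0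
  have hQ : IntervalIntegrable (fun t => fderiv ℝ (fderiv ℝ F) (c t) (ξ t) (ξ t)) volume a b :=
    ((((hF.fderiv_right (m := 1) (by norm_num)).continuous_fderiv one_ne_zero).comp_continuousOn
      hc).clm_apply hξ |>.clm_apply hξ).intervalIntegrable_of_Icc hab
  rw [← intervalIntegral.integral_add (hline s) (hline (-s)), ← intervalIntegral.integral_const_mul,
    ← intervalIntegral.integral_const_mul, ← intervalIntegral.integral_sub ((hline s).add
    (hline (-s))) (hF₀.const_mul 2), ← intervalIntegral.integral_sub (((hline s).add
    (hline (-s))).sub (hF₀.const_mul 2)) (hQ.const_mul _), ← abs_of_nonneg (sub_nonneg.2 hab)]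
  exact intervalIntegral.norm_integral_le_of_norm_le_const (E := ℝ) fun t ht =>
    abs_second_diff_sub_le hF (c t) (ξ t) (hK t (Ioc_subset_Icc_self ((uIoc_of_le hab) ▸ ht)))

theorem integral_fderiv_fderiv_nonneg_of_isLocalMin {F : X → ℝ} (hF : ContDiff ℝ 2 F) {a b : ℝ}
    (hab : a ≤ b) {c ξ : ℝ → X} (hc : ContinuousOn c (Icc a b)) (hξ : ContinuousOn ξ (Icc a b))
    (hmin : IsLocalMin (fun s : ℝ => ∫ t in a..b, F (c t + s • ξ t)) 0) :
    0 ≤ ∫ t in a..b, fderiv ℝ (fderiv ℝ F) (c t) (ξ t) (ξ t) := by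
  set g := fun s : ℝ => ∫ t in a..b, F (c t + s • ξ t)
  refine le_of_forall_pos_le_add fun η hη => ?_
  -- the `+ 1` keeps the tolerance positive when `a = b`
  set K := η / (2 * (b - a) + 1)
  have hK₀ : 0 < K := div_pos hη (by linarith)
  have hK : 2 * K * (b - a) ≤ η := by
    have : K * (2 * (b - a) + 1) = η := div_mul_cancel₀ _ (by linarith)
    linarith
  obtain ⟨s, ⟨⟨hs_pos, hs_neg⟩, hs_small⟩, hs0⟩ := (((hmin.and
      ((continuous_neg.tendsto' 0 0 neg_zero).eventually hmin)).and
      (eventually_forall_abs_fderiv_fderiv_sub_le hF hc hξ hK₀)).filter_mono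
      nhdsWithin_le_nhds |>.and self_mem_nhdsWithin).exists (f := 𝓝[≠] (0 : ℝ))
  have hbound := abs_integral_second_diff_sub_le hF hab hc hξ hs_small
  have hg0 : g 0 = ∫ t in a..b, F (c t) := by simp [g]
  have hs2 : 0 < s ^ 2 := pow_two_pos_of_ne_zero hs0
  refine le_of_mul_le_mul_left ?_ hs2
  linarith [(abs_le.1 hbound).2, mul_le_mul_of_nonneg_left hK hs2.le]

end SecondVariation

section Legendre

lemma intervalIntegral_comp_sub_div_eq_mul_integral {f : ℝ → ℝ}
    (hf : ∀ u ∉ Ioo (-1) 1, f u = 0) {a b t₀ h : ℝ} (hh : 0 < h) (ha : a ≤ t₀ - h)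
    (hb : t₀ + h ≤ b) :
    ∫ τ in a..b, f ((τ - t₀) / h) = h * ∫ u, f u := by
  simp_rw [sub_div]
  rw [intervalIntegral.integral_comp_div_sub f hh.ne', smul_eq_mul,
    intervalIntegral.integral_eq_integral_of_support_subset]
  refine (support_subset_iff'.2 hf).trans fun u hu => ⟨?_, ?_⟩
  · rw [← sub_div, div_lt_iff₀ hh]; nlinarith [hu.1]
  · rw [← sub_div, le_div_iff₀ hh]; nlinarith [hu.2]

lemma mul_mul_add_mul_sq_le {r s y z h MR MS : ℝ} (hr : |r| ≤ MR) (hs : |s| ≤ MS) (hh : 0 ≤ h)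
    (hh1 : h ≤ 1) :
    r * (h * y) * z + s * (h * y) ^ 2 ≤ h * (MR * |y * z| + MS * y ^ 2) := by
  have hr' : r * (y * z) ≤ MR * |y * z| :=
    (le_abs_self _).trans (abs_mul r _ ▸ mul_le_mul_of_nonneg_right hr (abs_nonneg _))
  have hs' : s * y ^ 2 ≤ MS * y ^ 2 :=
    mul_le_mul_of_nonneg_right ((le_abs_self s).trans hs) (sq_nonneg y)
  have hMS : 0 ≤ MS * y ^ 2 := mul_nonneg ((abs_nonneg s).trans hs) (sq_nonneg y)
  nlinarith [mul_le_mul_of_nonneg_left hr' hh, mul_le_mul_of_nonneg_left hs' (mul_nonneg hh hh),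
    mul_nonneg (mul_nonneg hh (sub_nonneg.2 hh1)) hMS]

variable {ψ : ℝ → ℝ}

lemma hasDerivAt_mul_comp_sub_div (hψ : Differentiable ℝ ψ) {h : ℝ} (hh : h ≠ 0) (t₀ τ : ℝ) :
    HasDerivAt (fun τ => h * ψ ((τ - t₀) / h)) (deriv ψ ((τ - t₀) / h)) τ := by
  have := ((hψ _).hasDerivAt.comp τ (((hasDerivAt_id τ).sub_const t₀).div_const h)).const_mul h
  exact this.congr_deriv (by simp only [id]; field_simp)

lemma integral_deriv_sq_pos (hψ : ContDiff ℝ 1 ψ)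
    (hψ₀ : ∀ u ∉ Ioo (-1) 1, ψ u = 0 ∧ deriv ψ u = 0) (hne : ψ ≠ 0) :
    0 < ∫ u, deriv ψ u ^ 2 := by
  obtain ⟨u, hu⟩ : ∃ u, deriv ψ u ≠ 0 := by
    by_contra! h0
    have hconst := is_const_of_deriv_eq_zero (hψ.differentiable one_ne_zero) h0
    exact hne (funext fun u => (hconst u 1).trans (hψ₀ 1 fun h1 => h1.2.false).1)
  exact ((hψ.continuous_deriv le_rfl).pow 2).integral_pos_of_hasCompactSupport_nonneg_nonzero
    (HasCompactSupport.intro (isCompact_Icc (a := -1) (b := 1)) fun u hu => by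
      simp [(hψ₀ u fun h1 => hu (Ioo_subset_Icc_self h1)).2])
    (fun u => sq_nonneg _) (pow_ne_zero 2 hu)

lemma exists_contDiff_eq_zero_of_notMem_Ioo :
    ∃ ψ : ℝ → ℝ, ContDiff ℝ 1 ψ ∧ (∀ u ∉ Ioo (-1) 1, ψ u = 0 ∧ deriv ψ u = 0)
      ∧ 0 < ∫ u, deriv ψ u ^ 2 := by
  obtain ⟨ψ, hψsupp, -, hψ, -, hψ0⟩ := exists_contDiff_tsupport_subset (n := 1)
    (Ioo_mem_nhds (neg_lt_zero.2 one_pos) one_pos : Ioo (-1 : ℝ) 1 ∈ 𝓝 0)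
  have hψ₀ : ∀ u ∉ Ioo (-1) 1, ψ u = 0 ∧ deriv ψ u = 0 := fun u hu =>
    ⟨image_eq_zero_of_notMem_tsupport fun h => hu (hψsupp h),
      image_eq_zero_of_notMem_tsupport fun h => hu (hψsupp (tsupport_deriv_subset h))⟩
  exact ⟨ψ, hψ, hψ₀, integral_deriv_sq_pos hψ hψ₀ fun h => by simp [h] at hψ0⟩

lemma integral_quadratic_comp_sub_div_le (hψ : ContDiff ℝ 1 ψ)
    (hψ₀ : ∀ u ∉ Ioo (-1) 1, ψ u = 0 ∧ deriv ψ u = 0) {a b t₀ h A MR MS : ℝ} {P R S : ℝ → ℝ}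
    (hP : ContinuousOn P (Icc a b)) (hR : ContinuousOn R (Icc a b))
    (hS : ContinuousOn S (Icc a b)) (hPA : ∀ τ ∈ Ioo (t₀ - h) (t₀ + h), P τ ≤ A)
    (hMR : ∀ τ ∈ Icc a b, |R τ| ≤ MR) (hMS : ∀ τ ∈ Icc a b, |S τ| ≤ MS) (hh : 0 < h)
    (hh1 : h ≤ 1) (ha : a ≤ t₀ - h) (hb : t₀ + h ≤ b) :
    ∫ τ in a..b, (P τ * deriv ψ ((τ - t₀) / h) ^ 2
        + R τ * (h * ψ ((τ - t₀) / h)) * deriv ψ ((τ - t₀) / h)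
        + S τ * (h * ψ ((τ - t₀) / h)) ^ 2)
      ≤ h * (A * (∫ u, deriv ψ u ^ 2) + h * ∫ u, (MR * |ψ u * deriv ψ u| + MS * ψ u ^ 2)) := by
  have hab : a ≤ b := by linarith
  have hψc : Continuous ψ := hψ.continuous
  have hψ'c : Continuous (deriv ψ) := hψ.continuous_deriv le_rfl
  have hcpt {f : ℝ → ℝ} (hf : ∀ u ∉ Ioo (-1) 1, f u = 0) : HasCompactSupport f :=
    HasCompactSupport.intro (isCompact_Icc (a := -1) (b := 1)) fun u hu =>
      hf u fun h1 => hu (Ioo_subset_Icc_self h1)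
  have hf₁ : Integrable fun u => deriv ψ u ^ 2 := (hψ'c.pow 2).integrable_of_hasCompactSupport
    (hcpt fun u hu => by simp [(hψ₀ u hu).2])
  have hf₂ : Integrable fun u => MR * |ψ u * deriv ψ u| + MS * ψ u ^ 2 :=
    Continuous.integrable_of_hasCompactSupport (by fun_prop) (hcpt fun u hu => by simp [hψ₀ u hu])
  set f : ℝ → ℝ := fun u => A * deriv ψ u ^ 2 + h * (MR * |ψ u * deriv ψ u| + MS * ψ u ^ 2)
  have hf₀ : ∀ u ∉ Ioo (-1) 1, f u = 0 := fun u hu => by simp [f, hψ₀ u hu]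
  calc _ ≤ ∫ τ in a..b, f ((τ - t₀) / h) := by
        refine intervalIntegral.integral_mono_on hab ?_ ?_ fun τ hτ => ?_
        · exact ContinuousOn.intervalIntegrable_of_Icc hab (by fun_prop)
        · exact Continuous.intervalIntegrable (by fun_prop) _ _
        set u := (τ - t₀) / h
        by_cases hu : u ∈ Ioo (-1) 1
        · have hτ' : τ ∈ Ioo (t₀ - h) (t₀ + h) := by
            constructor
            · have := hu.1; rw [lt_div_iff₀ hh] at this; linarith
            · have := hu.2; rw [div_lt_iff₀ hh] at this; linarith
          have := mul_mul_add_mul_sq_le (y := ψ u) (z := deriv ψ u) (hMR τ hτ) (hMS τ hτ) hh.le hh1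
          nlinarith [mul_le_mul_of_nonneg_right (hPA τ hτ') (sq_nonneg (deriv ψ u))]
        · simp [f, hψ₀ u hu]
    _ = _ := by
        rw [intervalIntegral_comp_sub_div_eq_mul_integral hf₀ hh ha hb,
          integral_add (hf₁.const_mul A) (hf₂.const_mul h), integral_const_mul, integral_const_mul]

theorem nonneg_of_integral_quadratic_nonneg_of_mem_Ioo {a b t₀ : ℝ} {P R S : ℝ → ℝ}
    (hP : ContinuousOn P (Icc a b)) (hR : ContinuousOn R (Icc a b))
    (hS : ContinuousOn S (Icc a b))
    (hQ : ∀ η : ℝ → ℝ, ContDiff ℝ 1 η → η a = 0 → η b = 0 →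
      0 ≤ ∫ t in a..b, (P t * deriv η t ^ 2 + R t * η t * deriv η t + S t * η t ^ 2))
    (ht₀ : t₀ ∈ Ioo a b) : 0 ≤ P t₀ := by
  obtain ⟨ψ, hψ, hψ₀, hK₀⟩ := exists_contDiff_eq_zero_of_notMem_Ioo
  set K₀ := ∫ u, deriv ψ u ^ 2
  obtain ⟨MR, hMR⟩ := isCompact_Icc.exists_bound_of_continuousOn hR
  obtain ⟨MS, hMS⟩ := isCompact_Icc.exists_bound_of_continuousOn hS
  set K₁ := ∫ u, (MR * |ψ u * deriv ψ u| + MS * ψ u ^ 2)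
  by_contra! hneg
  obtain ⟨δ, hδ, hPδ⟩ := Metric.eventually_nhds_iff.1 <|
    (hP.continuousAt (Icc_mem_nhds ht₀.1 ht₀.2)).eventually_lt_const
      (by linarith : P t₀ < P t₀ / 2)
  have hsmall : ∀ᶠ h in 𝓝[>] (0 : ℝ), 0 ≤ P t₀ / 2 * K₀ + h * K₁ := by
    filter_upwards [Ioo_mem_nhdsGT (lt_min (lt_min hδ one_pos)
      (lt_min (sub_pos.2 ht₀.1) (sub_pos.2 ht₀.2)))] with h ⟨hh, hhm⟩
    simp only [lt_min_iff] at hhm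
    have hPA : ∀ τ ∈ Ioo (t₀ - h) (t₀ + h), P τ ≤ P t₀ / 2 := fun τ hτ => by
      refine (hPδ ?_).le
      rw [Real.dist_eq, abs_lt]
      constructor <;> linarith [hτ.1, hτ.2]
    have hψa : (a - t₀) / h ∉ Ioo (-1) 1 := fun hu => by
      rw [mem_Ioo, lt_div_iff₀ hh] at hu; linarith [hu.1]
    have hψb : (b - t₀) / h ∉ Ioo (-1) 1 := fun hu => by
      rw [mem_Ioo, div_lt_iff₀ hh] at hu; linarith [hu.2]
    have hη := hQ (fun τ => h * ψ ((τ - t₀) / h)) (by fun_prop)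
      (by simp [(hψ₀ _ hψa).1]) (by simp [(hψ₀ _ hψb).1])
    rw [funext fun τ => (hasDerivAt_mul_comp_sub_div (hψ.differentiable one_ne_zero)
      hh.ne' t₀ τ).deriv] at hη
    exact nonneg_of_mul_nonneg_right (hη.trans (integral_quadratic_comp_sub_div_le hψ hψ₀ hP hR hS
      hPA hMR hMS hh hhm.1.2.le (by linarith) (by linarith))) hh
  have hlim := ge_of_tendsto (((tendsto_nhdsWithin_of_tendsto_nhds tendsto_id).mul_const
    K₁).const_add (P t₀ / 2 * K₀)) hsmall
  rw [zero_mul, add_zero] at hlim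
  linarith [mul_neg_of_neg_of_pos (by linarith : P t₀ / 2 < 0) hK₀]

theorem nonneg_of_integral_quadratic_nonneg {a b : ℝ} (hab : a < b) {P R S : ℝ → ℝ}
    (hP : ContinuousOn P (Icc a b)) (hR : ContinuousOn R (Icc a b))
    (hS : ContinuousOn S (Icc a b))
    (hQ : ∀ η : ℝ → ℝ, ContDiff ℝ 1 η → η a = 0 → η b = 0 →
      0 ≤ ∫ t in a..b, (P t * deriv η t ^ 2 + R t * η t * deriv η t + S t * η t ^ 2)) :
    ∀ t ∈ Icc a b, 0 ≤ P t := by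
  have hcl : closure (Ioo a b) = Icc a b := closure_Ioo hab.ne
  intro t ht
  exact le_on_closure (f := fun _ => 0)
    (fun τ hτ => nonneg_of_integral_quadratic_nonneg_of_mem_Ioo hP hR hS hQ hτ)
    continuousOn_const (hcl ▸ hP) (hcl ▸ ht)

end Legendre

section Lagrangian

variable {E : Type*} [NormedAddCommGroup E] [NormedSpace ℝ E]

lemma fderiv_fderiv_comp_add_clm_apply {X : Type*} [NormedAddCommGroup X] [NormedSpace ℝ X]
    {f : X → ℝ} (hf : ContDiff ℝ 2 f) (p : X) (ι : E →L[ℝ] X) (v w₁ w₂ : E) :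
    fderiv ℝ (fun v => fderiv ℝ (fun u => f (p + ι u)) v) v w₁ w₂
      = fderiv ℝ (fderiv ℝ f) (p + ι v) (ι w₁) (ι w₂) := by
  have hι : ∀ v, HasFDerivAt (fun u => p + ι u) ι v := fun v => ι.hasFDerivAt.const_add p
  have h1 : (fun v => fderiv ℝ (fun u => f (p + ι u)) v)
      = fun v => (fderiv ℝ f (p + ι v)).comp ι :=
    funext fun v => ((hf.differentiable (by norm_num) _).hasFDerivAt.comp v (hι v)).fderiv
  have h2 : HasFDerivAt (fun v => (fderiv ℝ f (p + ι v)).comp ι) _ v :=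
    (((hf.fderiv_right (m := 1) (by norm_num)).differentiable one_ne_zero
      (p + ι v)).hasFDerivAt.comp v (hι v)).clm_comp (hasFDerivAt_const ι v)
  rw [h1, h2.fderiv]
  simp

lemma fderiv_fderiv_partial_apply {L : ℝ × E × E → ℝ} (hL : ContDiff ℝ 2 L) (t : ℝ) (p v w : E) :
    fderiv ℝ (fun v => fderiv ℝ (fun u => L (t, p, u)) v) v w w
      = fderiv ℝ (fderiv ℝ L) (t, p, v) (0, 0, w) (0, 0, w) := by
  simpa using fderiv_fderiv_comp_add_clm_apply hL (t, p, 0)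
    (.inr ℝ ℝ (E × E) ∘L .inr ℝ E E) v w w

def IsWeakLocalMinimizer (L : ℝ × E × E → ℝ) (a b ε : ℝ) (x x' : ℝ → E) : Prop :=
  ∀ y y' : ℝ → E,
    (∀ t ∈ Icc a b, HasDerivWithinAt y (y' t) (Icc a b) t) →
    ContinuousOn y' (Icc a b) →
    y a = x a → y b = x b →
    (∀ t ∈ Icc a b, ‖y t - x t‖ + ‖y' t - x' t‖ ≤ ε) →
    (∫ t in a..b, L (t, x t, x' t)) ≤ ∫ t in a..b, L (t, y t, y' t)

lemma IsWeakLocalMinimizer.isLocalMin_integral_add_smul {L : ℝ × E × E → ℝ} {a b ε : ℝ}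
    {x x' φ φ' : ℝ → E} (hmin : IsWeakLocalMinimizer L a b ε x x') (hε : 0 < ε)
    (hx : ∀ t ∈ Icc a b, HasDerivWithinAt x (x' t) (Icc a b) t) (hx' : ContinuousOn x' (Icc a b))
    (hφ : ∀ t ∈ Icc a b, HasDerivWithinAt φ (φ' t) (Icc a b) t) (hφ' : ContinuousOn φ' (Icc a b))
    (hφa : φ a = 0) (hφb : φ b = 0) :
    IsLocalMin (fun s : ℝ => ∫ t in a..b, L ((t, x t, x' t) + s • ((0 : ℝ), φ t, φ' t))) 0 := by
  have hφc : ContinuousOn φ (Icc a b) := fun t ht => (hφ t ht).continuousWithinAt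
  obtain ⟨C, hC⟩ := isCompact_Icc.exists_bound_of_continuousOn (hφc.norm.add hφ'.norm)
  have hs : ∀ᶠ s in 𝓝 (0 : ℝ), |s| * C < ε :=
    ((continuous_abs.mul continuous_const).tendsto' 0 0 (by simp)).eventually_lt_const hε
  filter_upwards [hs] with s hs
  have hclose : ∀ t ∈ Icc a b, ‖x t + s • φ t - x t‖ + ‖x' t + s • φ' t - x' t‖ ≤ ε := by
    intro t ht
    simp only [add_sub_cancel_left, norm_smul, Real.norm_eq_abs, ← mul_add]
    exact (mul_le_mul_of_nonneg_left ((le_abs_self _).trans (hC t ht)) (abs_nonneg s)).trans hs.le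
  simpa using hmin (fun t => x t + s • φ t) (fun t => x' t + s • φ' t)
    (fun t ht => (hx t ht).add ((hφ t ht).const_smul s)) (hx'.add (hφ'.const_smul s))
    (by simp [hφa]) (by simp [hφb]) hclose

end Lagrangian

theorem legendre_condition_general
    {E : Type*} [NormedAddCommGroup E] [NormedSpace ℝ E]
    (a b : ℝ) (hab : a < b)
    (L : ℝ × E × E → ℝ) (hL : ContDiff ℝ 2 L)
    (x x' : ℝ → E)
    (hx : ∀ t ∈ Set.Icc a b, HasDerivWithinAt x (x' t) (Set.Icc a b) t)
    (hx' : ContinuousOn x' (Set.Icc a b))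
    (hmin : ∃ ε > (0 : ℝ), ∀ y y' : ℝ → E,
      (∀ t ∈ Set.Icc a b, HasDerivWithinAt y (y' t) (Set.Icc a b) t) →
      ContinuousOn y' (Set.Icc a b) →
      y a = x a → y b = x b →
      (∀ t ∈ Set.Icc a b, ‖y t - x t‖ + ‖y' t - x' t‖ ≤ ε) →
      (∫ t in a..b, L (t, x t, x' t)) ≤ ∫ t in a..b, L (t, y t, y' t)) :
    ∀ t ∈ Set.Icc a b, ∀ w : E,
      0 ≤ (fderiv ℝ (fun v => fderiv ℝ (fun u => L (t, x t, u)) v) (x' t)) w w := by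
  obtain ⟨ε, hε, hmin⟩ : ∃ ε > 0, IsWeakLocalMinimizer L a b ε x x' := hmin
  intro t ht w
  rw [fderiv_fderiv_partial_apply hL]
  set Q := fderiv ℝ (fderiv ℝ L)
  set c : ℝ → ℝ × E × E := fun τ => (τ, x τ, x' τ)
  set e₂ : ℝ × E × E := (0, w, 0)
  set e₃ : ℝ × E × E := (0, 0, w)
  have hc : ContinuousOn c (Icc a b) :=
    continuousOn_id.prodMk (ContinuousOn.prodMk (fun τ hτ => (hx τ hτ).continuousWithinAt) hx')
  have hQc : ContinuousOn (fun τ => Q (c τ)) (Icc a b) :=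
    ((hL.fderiv_right (m := 1) (by norm_num)).continuous_fderiv one_ne_zero).comp_continuousOn hc
  -- the second variation in the direction `(0, η • w, η' • w)`, expanded in `η` and `η'`
  refine nonneg_of_integral_quadratic_nonneg hab (P := fun τ => Q (c τ) e₃ e₃)
    (R := fun τ => Q (c τ) e₂ e₃ + Q (c τ) e₃ e₂) (S := fun τ => Q (c τ) e₂ e₂)
    (by fun_prop) (by fun_prop) (by fun_prop) (fun η hη hηa hηb => ?_) t ht
  have hηc : Continuous η := hη.continuous
  have hη' : Continuous (deriv η) := hη.continuous_deriv le_rfl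
  have hvar := integral_fderiv_fderiv_nonneg_of_isLocalMin hL hab.le hc
    (ξ := fun τ => ((0 : ℝ), η τ • w, deriv η τ • w)) (by fun_prop)
    (hmin.isLocalMin_integral_add_smul hε hx hx'
      (fun τ _ => ((hη.differentiable one_ne_zero τ).hasDerivAt.smul_const w).hasDerivWithinAt)
      (by fun_prop) (by simp [hηa]) (by simp [hηb]))
  refine hvar.trans_eq (intervalIntegral.integral_congr fun τ _ => ?_)
  have hξ : ((0 : ℝ), η τ • w, deriv η τ • w) = η τ • e₂ + deriv η τ • e₃ := by simp [e₂, e₃]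
  simp only [hξ, map_add, map_smul, add_apply, smul_apply, smul_eq_mul]
  ring

/-- **Legendre condition on a Banach space.**
If `L` is twice continuously Fréchet differentiable and `x ∈ C¹([a,b];E)` is a
local minimizer (w.r.t. the `C¹` norm) of `J[y] = ∫_a^b L(t,y,ẏ) dt` among
curves with the same endpoint values, then for every `t ∈ [a,b]` and every
`w ∈ E`, `D²_vv L(t,x(t),ẋ(t))(w,w) ≥ 0`. -/
theorem legendre_condition
    {E : Type*} [NormedAddCommGroup E] [NormedSpace ℝ E] [CompleteSpace E]
    (a b : ℝ) (hab : a < b)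
    (L : ℝ × E × E → ℝ) (hL : ContDiff ℝ 2 L)
    (x x' : ℝ → E)
    (hx : ∀ t ∈ Set.Icc a b, HasDerivWithinAt x (x' t) (Set.Icc a b) t)
    (hx' : ContinuousOn x' (Set.Icc a b))
    (hmin : ∃ ε > (0 : ℝ), ∀ y y' : ℝ → E,
      (∀ t ∈ Set.Icc a b, HasDerivWithinAt y (y' t) (Set.Icc a b) t) →
      ContinuousOn y' (Set.Icc a b) →
      y a = x a → y b = x b →
      (∀ t ∈ Set.Icc a b, ‖y t - x t‖ + ‖y' t - x' t‖ ≤ ε) →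
      (∫ t in a..b, L (t, x t, x' t)) ≤ ∫ t in a..b, L (t, y t, y' t)) :
    ∀ t ∈ Set.Icc a b, ∀ w : E,
      0 ≤ (fderiv ℝ (fun v => fderiv ℝ (fun u => L (t, x t, u)) v) (x' t)) w w :=
  legendre_condition_general a b hab L hL x x' hx hx' hmin
end

section
/- Let E be a real Banach space, a < b, and L : ℝ × E × E → ℝ twice continuously Fréchet differentiable. Then for every x, h ∈ C¹([a,b];E), the real function s ↦ ∫_a^b L(t, x(t) + s·h(t), ẋ(t) + s·ḣ(t)) dt is twice differentiable at s = 0, and its second derivative there equals ∫_a^b [ D²_vvL(t,x(t),ẋ(t))(ḣ(t),ḣ(t)) + 2·D²_vxL(t,x(t),ẋ(t))(ḣ(t),h(t)) + D²_xxL(t,x(t),ẋ(t))(h(t),h(t)) ] dt. -/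
/-!
Write `γ t = (t, x t, ẋ t)` and `δ t = (0, h t, ḣ t)`, so that the integrand is `L (γ t + s • δ t)`.
All data are jointly continuous on `ℝ × [a, b]`, so differentiation under the integral sign
(dominated by a bound on a compact rectangle) gives `φ' s = ∫ DL (γ + s • δ) δ`. The same argument,
applied to `(p, w) ↦ DL p w` along `(γ, δ) + s • (δ, 0)`, gives `φ'' 0 = ∫ D²L γ δ δ`. Splitting `δ`
into its `x`- and `v`-components and using the symmetry of `D²L` yields the three terms.
-/

open MeasureTheory Set ContinuousLinearMap

section VariationUnderIntegral

variable {P G : Type*} [NormedAddCommGroup P] [NormedSpace ℝ P] [NormedAddCommGroup G]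
  [NormedSpace ℝ G]

theorem hasDerivAt_intervalIntegral_of_continuousOn {F F' : ℝ → ℝ → G} {a b : ℝ} (hab : a ≤ b)
    (hF : ContinuousOn (Function.uncurry F) (univ ×ˢ Icc a b))
    (hF' : ContinuousOn (Function.uncurry F') (univ ×ˢ Icc a b))
    (hd : ∀ s, ∀ t ∈ Icc a b, HasDerivAt (F · t) (F' s t) s) (s₀ : ℝ) :
    HasDerivAt (fun s => ∫ t in a..b, F s t) (∫ t in a..b, F' s₀ t) s₀ := by
  have hIoc : uIoc a b ⊆ Icc a b := by
    rw [uIoc_of_le hab]; exact Ioc_subset_Icc_self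
  have slice {H : ℝ → ℝ → G} (hH : ContinuousOn (Function.uncurry H) (univ ×ˢ Icc a b))
      (s : ℝ) : ContinuousOn (H s) (Icc a b) :=
    hH.comp (continuous_const.prodMk continuous_id).continuousOn fun _ ht => ⟨mem_univ _, ht⟩
  obtain ⟨C, hC⟩ := (isCompact_Icc.prod isCompact_Icc).exists_bound_of_continuousOn
    (hF'.mono (prod_mono (subset_univ (Icc (s₀ - 1) (s₀ + 1))) subset_rfl))
  have hball : Metric.ball s₀ 1 ⊆ Icc (s₀ - 1) (s₀ + 1) := by
    rw [Real.ball_eq_Ioo]; exact Ioo_subset_Icc_self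
  exact (intervalIntegral.hasDerivAt_integral_of_dominated_loc_of_deriv_le (bound := fun _ => C)
    (Metric.ball_mem_nhds s₀ one_pos)
    (.of_forall fun s => ((slice hF s).mono hIoc).aestronglyMeasurable measurableSet_uIoc)
    (((slice hF s₀).mono (uIcc_of_le hab).subset).intervalIntegrable)
    (((slice hF' s₀).mono hIoc).aestronglyMeasurable measurableSet_uIoc)
    (ae_of_all _ fun t ht s hs => hC (s, t) ⟨hball hs, hIoc ht⟩)
    intervalIntegrable_const
    (ae_of_all _ fun t ht s _ => hd s t (hIoc ht))).2

theorem hasDerivAt_intervalIntegral_comp_add_smul_s4 {g : P → G} (hg : ContDiff ℝ 1 g) {a b : ℝ}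
    (hab : a ≤ b) {γ δ : ℝ → P} (hγ : ContinuousOn γ (Icc a b)) (hδ : ContinuousOn δ (Icc a b))
    (s₀ : ℝ) :
    HasDerivAt (fun s => ∫ t in a..b, g (γ t + s • δ t))
      (∫ t in a..b, fderiv ℝ g (γ t + s₀ • δ t) (δ t)) s₀ := by
  have hsnd : MapsTo Prod.snd (univ ×ˢ Icc a b : Set (ℝ × ℝ)) (Icc a b) := fun _ hp => hp.2
  have hδ₂ := hδ.comp continuousOn_snd hsnd
  have hcurve : ContinuousOn (fun p : ℝ × ℝ => γ p.2 + p.1 • δ p.2) (univ ×ˢ Icc a b) :=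
    (hγ.comp continuousOn_snd hsnd).add (continuousOn_fst.smul hδ₂)
  refine hasDerivAt_intervalIntegral_of_continuousOn (F := fun s t => g (γ t + s • δ t))
    (F' := fun s t => fderiv ℝ g (γ t + s • δ t) (δ t)) hab
    (hg.continuous.comp_continuousOn hcurve)
    (((hg.continuous_fderiv one_ne_zero).comp_continuousOn hcurve).clm_apply hδ₂)
    (fun s t _ => ?_) s₀
  have hline : HasDerivAt (fun s : ℝ => γ t + s • δ t) (δ t) s := by
    simpa using ((hasDerivAt_id s).smul_const (δ t)).const_add (γ t)
  exact (hg.differentiable one_ne_zero _).hasFDerivAt.comp_hasDerivAt s hline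

theorem fderiv_fderiv_fst_snd_apply_mk_zero {g : P → G} (hg : ContDiff ℝ 2 g) (p v w : P) :
    fderiv ℝ (fun q : P × P => fderiv ℝ g q.1 q.2) (p, w) (v, 0) =
      fderiv ℝ (fderiv ℝ g) p v w := by
  have hg' : HasFDerivAt (fderiv ℝ g) (fderiv ℝ (fderiv ℝ g) p) p :=
    ((hg.fderiv_right (by norm_num)).differentiable one_ne_zero p).hasFDerivAt
  rw [((hg'.comp (p, w) hasFDerivAt_fst).clm_apply hasFDerivAt_snd).fderiv]
  simp

theorem hasDerivAt_intervalIntegral_fderiv_comp_add_smul {g : P → G} (hg : ContDiff ℝ 2 g)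
    {a b : ℝ} (hab : a ≤ b) {γ δ : ℝ → P} (hγ : ContinuousOn γ (Icc a b))
    (hδ : ContinuousOn δ (Icc a b)) (s₀ : ℝ) :
    HasDerivAt (fun s => ∫ t in a..b, fderiv ℝ g (γ t + s • δ t) (δ t))
      (∫ t in a..b, fderiv ℝ (fderiv ℝ g) (γ t + s₀ • δ t) (δ t) (δ t)) s₀ := by
  have h := hasDerivAt_intervalIntegral_comp_add_smul_s4
    (g := fun q : P × P => fderiv ℝ g q.1 q.2) (γ := fun t => (γ t, δ t)) (δ := fun t => (δ t, 0))
    (((hg.fderiv_right (by norm_num)).comp contDiff_fst).clm_apply contDiff_snd)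
    hab (hγ.prodMk hδ) (hδ.prodMk continuousOn_const) s₀
  simpa [fderiv_fderiv_fst_snd_apply_mk_zero hg] using h

end VariationUnderIntegral

section PartialDerivatives

variable {P Q R G : Type*} [NormedAddCommGroup P] [NormedSpace ℝ P] [NormedAddCommGroup Q]
  [NormedSpace ℝ Q] [NormedAddCommGroup R] [NormedSpace ℝ R] [NormedAddCommGroup G]
  [NormedSpace ℝ G]

theorem fderiv_fderiv_comp_comp_apply {f : P → G} {ι : Q → P} {K : Q →L[ℝ] P} {y₀ : Q}
    (hf : DifferentiableAt ℝ (fderiv ℝ f) (ι y₀)) (hι : HasFDerivAt ι K y₀) (J : R →L[ℝ] P)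
    (u : Q) (v : R) :
    fderiv ℝ (fun y => (fderiv ℝ f (ι y)).comp J) y₀ u v =
      fderiv ℝ (fderiv ℝ f) (ι y₀) (K u) (J v) := by
  have h : HasFDerivAt (fun y => (fderiv ℝ f (ι y)).comp J)
      (((compL ℝ R P G).flip J).comp ((fderiv ℝ (fderiv ℝ f) (ι y₀)).comp K)) y₀ :=
    ((compL ℝ R P G).flip J).hasFDerivAt.comp y₀ (hf.hasFDerivAt.comp y₀ hι)
  rw [h.fderiv]
  simp

variable {T E F : Type*} [NormedAddCommGroup T] [NormedSpace ℝ T] [NormedAddCommGroup E]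
  [NormedSpace ℝ E] [NormedAddCommGroup F] [NormedSpace ℝ F] {L : T × E × F → G}

theorem hasFDerivAt_mk_mk_third (t : T) (y : E) (v : F) :
    HasFDerivAt (fun w : F => (t, y, w)) (inr ℝ T (E × F) ∘L inr ℝ E F) v :=
  (hasFDerivAt_prodMk_right t (y, v)).comp v (hasFDerivAt_prodMk_right y v)

theorem hasFDerivAt_mk_mk_second (t : T) (y : E) (v : F) :
    HasFDerivAt (fun z : E => (t, z, v)) (inr ℝ T (E × F) ∘L inl ℝ E F) y :=
  (hasFDerivAt_prodMk_right t (y, v)).comp y (hasFDerivAt_prodMk_left y v)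

theorem fderiv_comp_mk_mk_third {t : T} {y : E} {v : F} (hL : DifferentiableAt ℝ L (t, y, v)) :
    fderiv ℝ (fun w => L (t, y, w)) v =
      (fderiv ℝ L (t, y, v)).comp (inr ℝ T (E × F) ∘L inr ℝ E F) :=
  (hL.hasFDerivAt.comp v (hasFDerivAt_mk_mk_third t y v)).fderiv

theorem fderiv_comp_mk_mk_second {t : T} {y : E} {v : F} (hL : DifferentiableAt ℝ L (t, y, v)) :
    fderiv ℝ (fun z => L (t, z, v)) y =
      (fderiv ℝ L (t, y, v)).comp (inr ℝ T (E × F) ∘L inl ℝ E F) :=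
  (hL.hasFDerivAt.comp y (hasFDerivAt_mk_mk_second t y v)).fderiv

theorem fderiv_fderiv_apply_zero_mk (hL : ContDiff ℝ 2 L) (t : T) (y u : E) (v w : F) :
    fderiv ℝ (fderiv ℝ L) (t, y, v) (0, u, w) (0, u, w) =
      fderiv ℝ (fun v => fderiv ℝ (fun z => L (t, y, z)) v) v w w
        + (2 : ℝ) • fderiv ℝ (fun y => fderiv ℝ (fun z => L (t, y, z)) v) y u w
        + fderiv ℝ (fun y => fderiv ℝ (fun z => L (t, z, v)) y) y u u := by
  have hL₁ : Differentiable ℝ L := hL.differentiable two_ne_zero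
  have hL₂ : Differentiable ℝ (fderiv ℝ L) :=
    (hL.fderiv_right (by norm_num)).differentiable one_ne_zero
  have hsymm := (hL.contDiffAt (x := (t, y, v))).isSymmSndFDerivAt (by simp)
  have hsplit : ((0 : T), u, w) =
      inr ℝ T (E × F) (inl ℝ E F u) + inr ℝ T (E × F) (inr ℝ E F w) := by
    simp
  simp only [fderiv_comp_mk_mk_third (hL₁ _), fderiv_comp_mk_mk_second (hL₁ _)]
  rw [fderiv_fderiv_comp_comp_apply (hL₂ _) (hasFDerivAt_mk_mk_third t y v),
    fderiv_fderiv_comp_comp_apply (hL₂ _) (hasFDerivAt_mk_mk_second t y v),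
    fderiv_fderiv_comp_comp_apply (hL₂ _) (hasFDerivAt_mk_mk_second t y v), hsplit]
  simp only [map_add, add_apply, comp_apply, hsymm (inr ℝ T (E × F) (inr ℝ E F w))]
  module

end PartialDerivatives

theorem second_variation_general
    {E : Type*} [NormedAddCommGroup E] [NormedSpace ℝ E]
    (a b : ℝ) (hab : a < b)
    (L : ℝ × E × E → ℝ) (hL : ContDiff ℝ 2 L)
    (x x' h h' : ℝ → E)
    (hx : ∀ t ∈ Set.Icc a b, HasDerivWithinAt x (x' t) (Set.Icc a b) t)
    (hx' : ContinuousOn x' (Set.Icc a b))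
    (hh : ∀ t ∈ Set.Icc a b, HasDerivWithinAt h (h' t) (Set.Icc a b) t)
    (hh' : ContinuousOn h' (Set.Icc a b)) :
    (∀ᶠ s in nhds (0 : ℝ), DifferentiableAt ℝ
        (fun s : ℝ => ∫ t in a..b, L (t, x t + s • h t, x' t + s • h' t)) s) ∧
    HasDerivAt
      (deriv (fun s : ℝ => ∫ t in a..b, L (t, x t + s • h t, x' t + s • h' t)))
      (∫ t in a..b,
        (fderiv ℝ (fun v => fderiv ℝ (fun u => L (t, x t, u)) v) (x' t)) (h' t) (h' t)
          + 2 * (fderiv ℝ (fun y => fderiv ℝ (fun u => L (t, y, u)) (x' t)) (x t)) (h t) (h' t)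
          + (fderiv ℝ (fun y => fderiv ℝ (fun z => L (t, z, x' t)) y) (x t)) (h t) (h t))
      0 := by
  have hxc : ContinuousOn x (Icc a b) := fun t ht => (hx t ht).continuousWithinAt
  have hhc : ContinuousOn h (Icc a b) := fun t ht => (hh t ht).continuousWithinAt
  have hγ : ContinuousOn (fun t => (t, x t, x' t)) (Icc a b) :=
    continuousOn_id.prodMk (hxc.prodMk hx')
  have hδ : ContinuousOn (fun t => ((0 : ℝ), h t, h' t)) (Icc a b) :=
    continuousOn_const.prodMk (hhc.prodMk hh')
  have hvar : ∀ (s t : ℝ), (t, x t + s • h t, x' t + s • h' t) =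
      (t, x t, x' t) + s • ((0 : ℝ), h t, h' t) := by
    simp
  have hfirst := hasDerivAt_intervalIntegral_comp_add_smul_s4 (hL.of_le one_le_two) hab.le hγ hδ
  simp only [hvar]
  refine ⟨.of_forall fun s => (hfirst s).differentiableAt, ?_⟩
  rw [funext fun s => (hfirst s).deriv]
  refine (hasDerivAt_intervalIntegral_fderiv_comp_add_smul hL hab.le hγ hδ 0).congr_deriv ?_
  simp only [zero_smul, add_zero, fderiv_fderiv_apply_zero_mk hL, smul_eq_mul]

/-- **Second variation formula.**
Let `L` be twice continuously Fréchet differentiable. For every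
`x, h ∈ C¹([a,b];E)`, the function
`φ(s) = ∫_a^b L(t, x(t) + s•h(t), ẋ(t) + s•ḣ(t)) dt` is twice differentiable
at `s = 0` (it is differentiable near `0` and its derivative is differentiable
at `0`), and its second derivative at `0` equals
`∫_a^b [D²_vv L(ḣ,ḣ) + 2 D²_vx L(ḣ,h) + D²_xx L(h,h)] dt`
evaluated along `(t, x(t), ẋ(t))`. -/
theorem second_variation
    {E : Type*} [NormedAddCommGroup E] [NormedSpace ℝ E] [CompleteSpace E]
    (a b : ℝ) (hab : a < b)
    (L : ℝ × E × E → ℝ) (hL : ContDiff ℝ 2 L)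
    (x x' h h' : ℝ → E)
    (hx : ∀ t ∈ Set.Icc a b, HasDerivWithinAt x (x' t) (Set.Icc a b) t)
    (hx' : ContinuousOn x' (Set.Icc a b))
    (hh : ∀ t ∈ Set.Icc a b, HasDerivWithinAt h (h' t) (Set.Icc a b) t)
    (hh' : ContinuousOn h' (Set.Icc a b)) :
    (∀ᶠ s in nhds (0 : ℝ), DifferentiableAt ℝ
        (fun s : ℝ => ∫ t in a..b, L (t, x t + s • h t, x' t + s • h' t)) s) ∧
    HasDerivAt
      (deriv (fun s : ℝ => ∫ t in a..b, L (t, x t + s • h t, x' t + s • h' t)))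
      (∫ t in a..b,
        (fderiv ℝ (fun v => fderiv ℝ (fun u => L (t, x t, u)) v) (x' t)) (h' t) (h' t)
          + 2 * (fderiv ℝ (fun y => fderiv ℝ (fun u => L (t, y, u)) (x' t)) (x t)) (h t) (h' t)
          + (fderiv ℝ (fun y => fderiv ℝ (fun z => L (t, z, x' t)) y) (x t)) (h t) (h t))
      0 :=
  second_variation_general a b hab L hL x x' h h' hx hx' hh hh'
end

section
/- Let a < b be real numbers and R, P : [a,b] → ℝ continuous functions. If there exists t₀ ∈ [a,b] with R(t₀) < 0, then there exists h ∈ C¹([a,b];ℝ) with h(a) = h(b) = 0 such that ∫_a^b [ R(t)·ḣ(t)² + P(t)·h(t)² ] dt < 0. -/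
/-!
By continuity `R ≤ -δ < 0` on a short interval `[c, d]`, while `P ≤ M` on `[a, b]`. Take for `h`
the `C¹` bump `max ((t - c) (d - t)) 0 ²` supported on `[c, d]`: with `L = d - c`, its
integrals scale as `∫ ḣ² = 2 L⁷ / 105` and `∫ h² = L⁹ / 630`, so the functional is at most
`L⁷ / 630 · (M L² - 12 δ)`, which is negative once `L` is small.
-/

open Set Filter Topology intervalIntegral

theorem hasDerivAt_max_zero_sq (y : ℝ) : HasDerivAt (fun x : ℝ => max x 0 ^ 2) (2 * max y 0) y := by
  rcases lt_trichotomy y 0 with hy | rfl | hy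
  · have hzero : (fun x : ℝ => max x 0 ^ 2) =ᶠ[𝓝 y] fun _ => 0 := by
      filter_upwards [eventually_lt_nhds hy] with x hx
      simp [max_eq_right hx.le]
    simpa [max_eq_right hy.le] using (hasDerivAt_const y (0 : ℝ)).congr_of_eventuallyEq hzero
  · -- `0 ≤ max x 0 ^ 2 ≤ x ^ 2 = o(x)` at `0`
    rw [hasDerivAt_iff_isLittleO_nhds_zero]
    have hle : (fun x : ℝ => max x 0 ^ 2) =O[𝓝 0] fun x => x ^ 2 :=
      Asymptotics.IsBigO.of_bound 1 (Eventually.of_forall fun x => by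
        simp only [norm_pow, Real.norm_eq_abs, one_mul]
        exact pow_le_pow_left₀ (abs_nonneg _) (by simp [abs_le, le_abs_self]) 2)
    simpa using hle.trans_isLittleO (Asymptotics.isLittleO_pow_id one_lt_two)
  · have hsq : (fun x : ℝ => max x 0 ^ 2) =ᶠ[𝓝 y] fun x => x ^ 2 := by
      filter_upwards [eventually_gt_nhds hy] with x hx
      rw [max_eq_left hx.le]
    simpa [max_eq_left hy.le] using (hasDerivAt_pow 2 y).congr_of_eventuallyEq hsq

theorem HasDerivAt.max_zero_sq {f : ℝ → ℝ} {f' x : ℝ} (hf : HasDerivAt f f' x) :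
    HasDerivAt (fun y => max (f y) 0 ^ 2) (2 * max (f x) 0 * f') x :=
  (hasDerivAt_max_zero_sq (f x)).comp x hf

theorem intervalIntegral.integral_eq_of_eq_zero_outside {E : Type*} [NormedAddCommGroup E]
    [NormedSpace ℝ E] {f : ℝ → E} {a b c d : ℝ} (hac : a ≤ c) (hcd : c ≤ d) (hdb : d ≤ b)
    (hf : ∀ t, t ≤ c ∨ d < t → f t = 0) :
    ∫ t in a..b, f t = ∫ t in c..d, f t := by
  rw [integral_of_le (hac.trans (hcd.trans hdb)), integral_of_le hcd]
  refine MeasureTheory.setIntegral_eq_of_subset_of_forall_sdiff_eq_zero measurableSet_Ioc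
    (Ioc_subset_Ioc hac hdb) fun t ⟨_, ht⟩ => hf t ?_
  by_contra! h
  exact ht ⟨h.1, h.2⟩

def bump (c d t : ℝ) : ℝ := max ((t - c) * (d - t)) 0 ^ 2

def bumpDeriv (c d t : ℝ) : ℝ := 2 * max ((t - c) * (d - t)) 0 * (c + d - 2 * t)

theorem hasDerivAt_bump (c d t : ℝ) : HasDerivAt (bump c d) (bumpDeriv c d t) t := by
  refine (((hasDerivAt_id' t).sub_const c).fun_mul ((hasDerivAt_id' t).const_sub d)).max_zero_sq
    |>.congr_deriv ?_
  simp only [bumpDeriv]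
  ring

theorem continuous_bump (c d : ℝ) : Continuous (bump c d) := by
  unfold bump; fun_prop

theorem continuous_bumpDeriv (c d : ℝ) : Continuous (bumpDeriv c d) := by
  unfold bumpDeriv; fun_prop

theorem max_mul_sub_eq_zero {c d t : ℝ} (hcd : c ≤ d) (ht : t ≤ c ∨ d ≤ t) :
    max ((t - c) * (d - t)) 0 = 0 := by
  refine max_eq_right (mul_nonpos_iff.2 ?_)
  rcases ht with ht | ht
  · exact .inr ⟨by linarith, by linarith⟩
  · exact .inl ⟨by linarith, by linarith⟩

theorem bump_eq_zero {c d t : ℝ} (hcd : c ≤ d) (ht : t ≤ c ∨ d ≤ t) : bump c d t = 0 := by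
  simp [bump, max_mul_sub_eq_zero hcd ht]

theorem bumpDeriv_eq_zero {c d t : ℝ} (hcd : c ≤ d) (ht : t ≤ c ∨ d ≤ t) :
    bumpDeriv c d t = 0 := by
  simp [bumpDeriv, max_mul_sub_eq_zero hcd ht]

theorem bump_zero_sub (c d t : ℝ) : bump 0 (d - c) (t - c) = bump c d t := by
  simp only [bump]; ring_nf

theorem bumpDeriv_zero_sub (c d t : ℝ) : bumpDeriv 0 (d - c) (t - c) = bumpDeriv c d t := by
  simp only [bumpDeriv]; ring_nf

theorem integral_bump_zero_sq {L : ℝ} (hL : 0 ≤ L) :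
    ∫ s in 0..L, bump 0 L s ^ 2 = L ^ 9 / 630 := by
  have hpoly : EqOn (fun s => bump 0 L s ^ 2)
      (fun s => L ^ 4 * s ^ 4 - 4 * L ^ 3 * s ^ 5 + 6 * L ^ 2 * s ^ 6 - 4 * L * s ^ 7 + s ^ 8)
      (uIcc 0 L) := by
    intro s hs
    rw [uIcc_of_le hL] at hs
    simp only [bump, sub_zero, max_eq_left (mul_nonneg hs.1 (sub_nonneg.2 hs.2))]
    ring
  rw [integral_congr hpoly, integral_add, integral_sub, integral_add, integral_sub]
  all_goals try simp only [integral_const_mul, integral_pow]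
  · ring
  all_goals exact (by fun_prop : Continuous _).intervalIntegrable _ _

theorem integral_bumpDeriv_zero_sq {L : ℝ} (hL : 0 ≤ L) :
    ∫ s in 0..L, bumpDeriv 0 L s ^ 2 = 2 * L ^ 7 / 105 := by
  have hpoly : EqOn (fun s => bumpDeriv 0 L s ^ 2)
      (fun s => 4 * L ^ 4 * s ^ 2 - 24 * L ^ 3 * s ^ 3 + 52 * L ^ 2 * s ^ 4 - 48 * L * s ^ 5
        + 16 * s ^ 6) (uIcc 0 L) := by
    intro s hs
    rw [uIcc_of_le hL] at hs
    simp only [bumpDeriv, sub_zero, max_eq_left (mul_nonneg hs.1 (sub_nonneg.2 hs.2))]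
    ring
  rw [integral_congr hpoly, integral_add, integral_sub, integral_add, integral_sub]
  all_goals try simp only [integral_const_mul, integral_pow]
  · ring
  all_goals exact (by fun_prop : Continuous _).intervalIntegrable _ _

theorem integral_bump_sq {c d : ℝ} (hcd : c ≤ d) :
    ∫ t in c..d, bump c d t ^ 2 = (d - c) ^ 9 / 630 := by
  simp_rw [← bump_zero_sub c d]
  rw [integral_comp_sub_right (fun s => bump 0 (d - c) s ^ 2), sub_self]
  exact integral_bump_zero_sq (sub_nonneg.2 hcd)

theorem integral_bumpDeriv_sq {c d : ℝ} (hcd : c ≤ d) :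
    ∫ t in c..d, bumpDeriv c d t ^ 2 = 2 * (d - c) ^ 7 / 105 := by
  simp_rw [← bumpDeriv_zero_sub c d]
  rw [integral_comp_sub_right (fun s => bumpDeriv 0 (d - c) s ^ 2), sub_self]
  exact integral_bumpDeriv_zero_sq (sub_nonneg.2 hcd)

theorem integral_mul_bumpDeriv_sq_add_mul_bump_sq_le {R P : ℝ → ℝ} {c d δ M : ℝ} (hcd : c ≤ d)
    (hR : ContinuousOn R (Icc c d)) (hP : ContinuousOn P (Icc c d))
    (hRδ : ∀ t ∈ Icc c d, R t ≤ -δ) (hPM : ∀ t ∈ Icc c d, P t ≤ M) :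
    ∫ t in c..d, (R t * bumpDeriv c d t ^ 2 + P t * bump c d t ^ 2)
      ≤ (d - c) ^ 7 / 630 * (M * (d - c) ^ 2 - 12 * δ) := by
  have hint (f g : ℝ → ℝ) (hf : ContinuousOn f (Icc c d)) (hg : Continuous g) :
      IntervalIntegrable (fun t => f t * g t ^ 2) MeasureTheory.volume c d :=
    (hf.mul (hg.pow 2).continuousOn).intervalIntegrable_of_Icc hcd
  calc ∫ t in c..d, (R t * bumpDeriv c d t ^ 2 + P t * bump c d t ^ 2)
      ≤ ∫ t in c..d, (-δ * bumpDeriv c d t ^ 2 + M * bump c d t ^ 2) := by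
        refine integral_mono_on hcd
          ((hint R _ hR (continuous_bumpDeriv c d)).add (hint P _ hP (continuous_bump c d)))
          ((hint _ _ continuousOn_const (continuous_bumpDeriv c d)).add
            (hint _ _ continuousOn_const (continuous_bump c d))) fun t ht => ?_
        gcongr
        exacts [hRδ t ht, hPM t ht]
    _ = (d - c) ^ 7 / 630 * (M * (d - c) ^ 2 - 12 * δ) := by
        rw [integral_add (hint _ _ continuousOn_const (continuous_bumpDeriv c d))
            (hint _ _ continuousOn_const (continuous_bump c d)),
          integral_const_mul, integral_const_mul, integral_bumpDeriv_sq hcd, integral_bump_sq hcd]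
        ring

theorem exists_Icc_subset_of_eventually_nhdsWithin {p : ℝ → Prop} {a b t₀ ε : ℝ} (hab : a < b)
    (ht₀ : t₀ ∈ Icc a b) (hε : 0 < ε) (hp : ∀ᶠ t in 𝓝[Icc a b] t₀, p t) :
    ∃ c d, a ≤ c ∧ c < d ∧ d ≤ b ∧ d - c < ε ∧ ∀ t ∈ Icc c d, p t := by
  obtain ⟨η, hη, hball⟩ := Metric.eventually_nhds_iff.1 (eventually_nhdsWithin_iff.1 hp)
  obtain ⟨r, hr, hrη, hrε⟩ : ∃ r, 0 < r ∧ r < η ∧ 2 * r < ε :=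
    ⟨min η ε / 3, by positivity, by linarith [min_le_left η ε], by linarith [min_le_right η ε]⟩
  refine ⟨max a (t₀ - r), min b (t₀ + r), le_max_left _ _, ?_, min_le_left _ _, ?_, ?_⟩
  · exact max_lt (lt_min hab (by linarith [ht₀.1])) (lt_min (by linarith [ht₀.2]) (by linarith))
  · linarith [le_max_right a (t₀ - r), min_le_right b (t₀ + r)]
  · intro t ⟨hct, htd⟩
    refine hball ?_ ⟨(le_max_left _ _).trans hct, htd.trans (min_le_left _ _)⟩
    rw [Real.dist_eq, abs_sub_lt_iff]
    constructor <;> linarith [le_max_right a (t₀ - r), min_le_right b (t₀ + r)]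

/-- If `R, P : [a,b] → ℝ` are continuous and `R(t₀) < 0` for some `t₀ ∈ [a,b]`,
then there exists `h ∈ C¹([a,b];ℝ)` with `h(a) = h(b) = 0` such that
`∫_a^b [R(t)·ḣ(t)² + P(t)·h(t)²] dt < 0`. -/
theorem exists_variation_neg_of_R_neg
    (a b : ℝ) (hab : a < b)
    (R P : ℝ → ℝ)
    (hR : ContinuousOn R (Set.Icc a b))
    (hP : ContinuousOn P (Set.Icc a b))
    (t₀ : ℝ) (ht₀ : t₀ ∈ Set.Icc a b) (hRneg : R t₀ < 0) :
    ∃ h h' : ℝ → ℝ,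
      (∀ t ∈ Set.Icc a b, HasDerivWithinAt h (h' t) (Set.Icc a b) t) ∧
      ContinuousOn h' (Set.Icc a b) ∧
      h a = 0 ∧ h b = 0 ∧
      (∫ t in a..b, (R t * (h' t) ^ 2 + P t * (h t) ^ 2)) < 0 := by
  set δ := -R t₀ / 2
  obtain ⟨M, hM⟩ := isCompact_Icc.exists_bound_of_continuousOn hP
  have hshort : ∀ᶠ L in 𝓝 (0 : ℝ), M * L ^ 2 < 12 * δ :=
    (by fun_prop : Continuous fun L : ℝ => M * L ^ 2).continuousAt.eventually_lt
      continuousAt_const (by simp only [δ]; linarith)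
  obtain ⟨ε, hε, hεshort⟩ := Metric.eventually_nhds_iff.1 hshort
  have hRδ : ∀ᶠ t in 𝓝[Icc a b] t₀, R t < -δ :=
    (hR t₀ ht₀).eventually_lt_const (by simp only [δ]; linarith)
  obtain ⟨c, d, hac, hcd, hdb, hdcε, hRcd⟩ :=
    exists_Icc_subset_of_eventually_nhdsWithin hab ht₀ hε hRδ
  have hsub : Icc c d ⊆ Icc a b := Icc_subset_Icc hac hdb
  refine ⟨bump c d, bumpDeriv c d, fun t _ => (hasDerivAt_bump c d t).hasDerivWithinAt,
    (continuous_bumpDeriv c d).continuousOn, bump_eq_zero hcd.le (.inl hac),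
    bump_eq_zero hcd.le (.inr hdb), ?_⟩
  calc ∫ t in a..b, (R t * bumpDeriv c d t ^ 2 + P t * bump c d t ^ 2)
      = ∫ t in c..d, (R t * bumpDeriv c d t ^ 2 + P t * bump c d t ^ 2) :=
        integral_eq_of_eq_zero_outside hac hcd.le hdb fun t ht => by
          simp [bump_eq_zero hcd.le (ht.imp_right le_of_lt),
            bumpDeriv_eq_zero hcd.le (ht.imp_right le_of_lt)]
    _ ≤ (d - c) ^ 7 / 630 * (M * (d - c) ^ 2 - 12 * δ) :=
        integral_mul_bumpDeriv_sq_add_mul_bump_sq_le hcd.le (hR.mono hsub) (hP.mono hsub)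
          (fun t ht => (hRcd t ht).le) fun t ht => (le_abs_self _).trans (hM t (hsub ht))
    _ < 0 := by
        have hlen : M * (d - c) ^ 2 < 12 * δ :=
          hεshort (by rwa [Real.dist_eq, sub_zero, abs_of_pos (sub_pos.2 hcd)])
        exact mul_neg_of_pos_of_neg (by have := sub_pos.2 hcd; positivity) (by linarith)
end

section
/- Let E be a real Banach space with dual E* = (E →L[ℝ] ℝ), a < b, and A, B : [a,b] → E* continuous maps. Suppose that for every h ∈ C¹([a,b];E) with h(a) = h(b) = 0 one has ∫_a^b [ A(t)(h(t)) + B(t)(ḣ(t)) ] dt = 0. Then B is differentiable on [a,b] and B'(t) = A(t) for every t ∈ [a,b]. -/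
open Set MeasureTheory

/-!
Let `Φ t = ∫_a^t A`. Integration by parts gives `∫_a^b (A(h) + Φ(ḣ)) = 0` for every admissible `h`,
so the hypothesis becomes `∫_a^b (B - Φ)(ḣ) = 0`. Testing this on `h = φ • v`, where `φ` is the
primitive of `c - m` for `c t = (B t - Φ t) v` and `m` its mean (so `φ` vanishes at both ends),
yields `∫_a^b (c - m)² = 0`. Hence `B - Φ` is constant on `[a, b]` and `B' = Φ' = A`.
-/

theorem ContinuousOn.eqOn_zero_of_nonneg_of_integral_eq_zero {g : ℝ → ℝ} {a b : ℝ}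
    (hab : a < b) (hg : ContinuousOn g (Icc a b)) (hg₀ : ∀ t ∈ Icc a b, 0 ≤ g t)
    (hint : ∫ t in a..b, g t = 0) : EqOn g 0 (Icc a b) := by
  have hae : g =ᵐ[volume.restrict (Ioc a b)] 0 :=
    (intervalIntegral.integral_eq_zero_iff_of_le_of_nonneg_ae hab.le
      ((ae_restrict_iff' measurableSet_Ioc).2 (.of_forall fun t ht =>
        hg₀ t (Ioc_subset_Icc_self ht)))
      (hg.intervalIntegrable_of_Icc hab.le)).1 hint
  rw [Measure.restrict_congr_set Ioc_ae_eq_Icc] at hae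
  exact Measure.eqOn_Icc_of_ae_eq volume hab.ne hae hg continuousOn_const

theorem ContinuousOn.hasDerivWithinAt_integral_Icc {G : Type*} [NormedAddCommGroup G]
    [NormedSpace ℝ G] [CompleteSpace G] {f : ℝ → G} {a b t : ℝ}
    (hf : ContinuousOn f (Icc a b)) (ht : t ∈ Icc a b) :
    HasDerivWithinAt (fun u => ∫ x in a..u, f x) (f t) (Icc a b) t := by
  have : Fact (t ∈ Icc a b) := ⟨ht⟩
  exact intervalIntegral.integral_hasDerivWithinAt_right
    ((hf.mono (Icc_subset_Icc_right ht.2)).intervalIntegrable_of_Icc ht.1)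
    (hf.stronglyMeasurableAtFilter_nhdsWithin measurableSet_Icc t) (hf t ht)

theorem integral_deriv_clm_apply_eq_sub_of_hasDerivWithinAt {E G : Type*}
    [NormedAddCommGroup E] [NormedSpace ℝ E] [NormedAddCommGroup G] [NormedSpace ℝ G]
    [CompleteSpace G] {a b : ℝ} (hab : a ≤ b) {u u' : ℝ → E →L[ℝ] G} {v v' : ℝ → E}
    (hu : ∀ x ∈ Icc a b, HasDerivWithinAt u (u' x) (Icc a b) x)
    (hv : ∀ x ∈ Icc a b, HasDerivWithinAt v (v' x) (Icc a b) x)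
    (hu' : ContinuousOn u' (Icc a b)) (hv' : ContinuousOn v' (Icc a b)) :
    ∫ x in a..b, u' x (v x) + u x (v' x) = u b (v b) - u a (v a) := by
  have hu_cont : ContinuousOn u (Icc a b) := fun x hx => (hu x hx).continuousWithinAt
  have hv_cont : ContinuousOn v (Icc a b) := fun x hx => (hv x hx).continuousWithinAt
  refine intervalIntegral.integral_eq_sub_of_hasDeriv_right_of_le hab (hu_cont.clm_apply hv_cont)
    (fun x hx => ?_) ((hu'.clm_apply hv_cont).add (hu_cont.clm_apply hv')
      |>.intervalIntegrable_of_Icc hab)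
  have hIcc : Icc a b ∈ nhds x := Icc_mem_nhds hx.1 hx.2
  exact (((hu x (Ioo_subset_Icc_self hx)).hasDerivAt hIcc).clm_apply
    ((hv x (Ioo_subset_Icc_self hx)).hasDerivAt hIcc)).hasDerivWithinAt

theorem eq_of_forall_integral_mul_deriv_eq_zero {c : ℝ → ℝ} {a b : ℝ} (hab : a < b)
    (hc : ContinuousOn c (Icc a b))
    (h : ∀ φ φ' : ℝ → ℝ, (∀ t ∈ Icc a b, HasDerivWithinAt φ (φ' t) (Icc a b) t) →
      ContinuousOn φ' (Icc a b) → φ a = 0 → φ b = 0 → ∫ t in a..b, c t * φ' t = 0) :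
    ∀ t ∈ Icc a b, c t = c a := by
  set m := (∫ t in a..b, c t) / (b - a)
  set g := fun t => c t - m
  have hg : ContinuousOn g (Icc a b) := hc.sub continuousOn_const
  have hg_int : ∫ t in a..b, g t = 0 := by
    rw [intervalIntegral.integral_sub (hc.intervalIntegrable_of_Icc hab.le)
      intervalIntegrable_const, intervalIntegral.integral_const, smul_eq_mul,
      mul_div_cancel₀ _ (sub_ne_zero.2 hab.ne'), sub_self]
  have hcg : ∫ t in a..b, c t * g t = 0 :=
    h (fun u => ∫ x in a..u, g x) g (fun t ht => hg.hasDerivWithinAt_integral_Icc ht) hg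
      intervalIntegral.integral_same hg_int
  have hgg : ∫ t in a..b, g t * g t = 0 := by
    have hsplit : ∫ t in a..b, g t * g t
        = (∫ t in a..b, c t * g t) - m * ∫ t in a..b, g t := by
      rw [← intervalIntegral.integral_const_mul,
        ← intervalIntegral.integral_sub (f := fun t => c t * g t) (g := fun t => m * g t)
        ((hc.mul hg).intervalIntegrable_of_Icc hab.le)
        ((continuousOn_const.mul hg).intervalIntegrable_of_Icc hab.le)]
      congr 1 with t
      ring
    rw [hsplit, hcg, hg_int, mul_zero, sub_zero]
  have hg_zero := (hg.mul hg).eqOn_zero_of_nonneg_of_integral_eq_zero hab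
    (fun t _ => mul_self_nonneg _) hgg
  intro t ht
  have ht' := mul_self_eq_zero.1 (hg_zero ht)
  have ha' := mul_self_eq_zero.1 (hg_zero (left_mem_Icc.2 hab.le))
  simp only [g] at ht' ha'
  linarith

theorem eq_of_forall_integral_apply_deriv_eq_zero {E : Type*} [NormedAddCommGroup E]
    [NormedSpace ℝ E] {C : ℝ → E →L[ℝ] ℝ} {a b : ℝ} (hab : a < b)
    (hC : ContinuousOn C (Icc a b))
    (h : ∀ φ φ' : ℝ → E, (∀ t ∈ Icc a b, HasDerivWithinAt φ (φ' t) (Icc a b) t) →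
      ContinuousOn φ' (Icc a b) → φ a = 0 → φ b = 0 → ∫ t in a..b, C t (φ' t) = 0) :
    ∀ t ∈ Icc a b, C t = C a := by
  intro t ht
  ext v
  refine eq_of_forall_integral_mul_deriv_eq_zero hab (hC.clm_apply continuousOn_const)
    (fun φ φ' hφ hφ' ha hb => ?_) t ht
  have htest := h (fun s => φ s • v) (fun s => φ' s • v) (fun s hs => (hφ s hs).smul_const v)
    (hφ'.smul continuousOn_const) (by simp [ha]) (by simp [hb])
  simpa [mul_comm] using htest

theorem duBoisReymond_general
    {E : Type*} [NormedAddCommGroup E] [NormedSpace ℝ E]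
    (a b : ℝ) (hab : a < b)
    (A B : ℝ → E →L[ℝ] ℝ)
    (hA : ContinuousOn A (Set.Icc a b))
    (hB : ContinuousOn B (Set.Icc a b))
    (hyp : ∀ h h' : ℝ → E,
      (∀ t ∈ Set.Icc a b, HasDerivWithinAt h (h' t) (Set.Icc a b) t) →
      ContinuousOn h' (Set.Icc a b) →
      h a = 0 → h b = 0 →
      (∫ t in a..b, (A t (h t) + B t (h' t))) = 0) :
    ∀ t ∈ Set.Icc a b, HasDerivWithinAt B (A t) (Set.Icc a b) t := by
  set Φ : ℝ → E →L[ℝ] ℝ := fun t => ∫ s in a..t, A s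
  have hΦ : ∀ t ∈ Icc a b, HasDerivWithinAt Φ (A t) (Icc a b) t :=
    fun t ht => hA.hasDerivWithinAt_integral_Icc ht
  have hΦ_cont : ContinuousOn Φ (Icc a b) := fun t ht => (hΦ t ht).continuousWithinAt
  have hconst : ∀ t ∈ Icc a b, B t - Φ t = B a - Φ a := by
    refine eq_of_forall_integral_apply_deriv_eq_zero hab (hB.sub hΦ_cont)
      fun h h' hh hh' ha hb => ?_
    have hh_cont : ContinuousOn h (Icc a b) := fun t ht => (hh t ht).continuousWithinAt
    have ibp := integral_deriv_clm_apply_eq_sub_of_hasDerivWithinAt hab.le hΦ hh hA hh'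
    rw [ha, hb, map_zero, map_zero, sub_zero] at ibp
    have hdiff := congrArg₂ (· - ·) (hyp h h' hh hh' ha hb) ibp
    rw [← intervalIntegral.integral_sub (f := fun t => A t (h t) + B t (h' t))
      (g := fun t => A t (h t) + Φ t (h' t))
      (((hA.clm_apply hh_cont).add (hB.clm_apply hh')).intervalIntegrable_of_Icc hab.le)
      (((hA.clm_apply hh_cont).add (hΦ_cont.clm_apply hh')).intervalIntegrable_of_Icc hab.le),
      sub_zero] at hdiff
    simpa only [sub_apply, add_sub_add_left_eq_sub] using hdiff
  intro t ht
  have hB_eq : EqOn B (fun s => Φ s + (B a - Φ a)) (Icc a b) := fun s hs => by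
    dsimp only
    rw [← hconst s hs, add_sub_cancel]
  exact ((hΦ t ht).add_const _).congr hB_eq (hB_eq ht)

/-- **DuBois-Reymond / fundamental lemma variant.**
Let `A, B : [a,b] → E*` be continuous (`E* = E →L[ℝ] ℝ`). If
`∫_a^b [A(t)(h(t)) + B(t)(ḣ(t))] dt = 0` for every `h ∈ C¹([a,b];E)` with
`h(a) = h(b) = 0`, then `B` is differentiable on `[a,b]` with `B'(t) = A(t)`
for every `t ∈ [a,b]`. -/
theorem duBoisReymond
    {E : Type*} [NormedAddCommGroup E] [NormedSpace ℝ E] [CompleteSpace E]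
    (a b : ℝ) (hab : a < b)
    (A B : ℝ → E →L[ℝ] ℝ)
    (hA : ContinuousOn A (Set.Icc a b))
    (hB : ContinuousOn B (Set.Icc a b))
    (hyp : ∀ h h' : ℝ → E,
      (∀ t ∈ Set.Icc a b, HasDerivWithinAt h (h' t) (Set.Icc a b) t) →
      ContinuousOn h' (Set.Icc a b) →
      h a = 0 → h b = 0 →
      (∫ t in a..b, (A t (h t) + B t (h' t))) = 0) :
    ∀ t ∈ Set.Icc a b, HasDerivWithinAt B (A t) (Set.Icc a b) t :=
  duBoisReymond_general a b hab A B hA hB hyp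
end

section
/- Let E be a real Banach space and L : ℝ × E × E → ℝ twice continuously Fréchet differentiable. Let h_t : ℝ × E × ℝ → ℝ and h_x : ℝ × E × ℝ → E be twice continuously Fréchet differentiable maps satisfying h_t(t,y,0) = t and h_x(t,y,0) = y for all (t,y), and define the generators T(t,y) = ∂h_t/∂s(t,y,0) and X(t,y) = ∂h_x/∂s(t,y,0). Let x ∈ C¹([a,b];E) and t ∈ [a,b], and write T'(t) = ∂_tT(t,x(t)) + D_yT(t,x(t))(ẋ(t)) and X'(t) = ∂_tX(t,x(t)) + D_yX(t,x(t))(ẋ(t)). Consider the real function φ(s) = L( h_t(t,x(t),s), h_x(t,x(t),s), [∂_t h_x(t,x(t),s) + D_y h_x(t,x(t),s)(ẋ(t))] / [∂_t h_t(t,x(t),s) + D_y h_t(t,x(t),s)(ẋ(t))] ) · ( ∂_t h_t(t,x(t),s) + D_y h_t(t,x(t),s)(ẋ(t)) ), which is defined for s near 0. Then φ is differentiable at s = 0 and φ'(0) = 0 if and only if ∂_tL(t,x(t),ẋ(t))·T(t,x(t)) + D_xL(t,x(t),ẋ(t))(X(t,x(t))) + D_vL(t,x(t),ẋ(t))( X'(t)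 − T'(t)·ẋ(t) ) + L(t,x(t),ẋ(t))·T'(t) = 0. -/
/-!
At `s = 0` the transformations are the identity, so the denominator
`∂ₜht + D_yht(ẋ)` equals `1` and the curve `s ↦ (ht, hx, quotient)` passes through
`(t, x t, ẋ t)`; the chain and product rules then give `φ'(0)` as
`DL(T, X, q') + L · T'`, where `q'` is the derivative of the quotient at `0`.
The one nontrivial input is that differentiating `∂ₜh + D_yh(ẋ)` in `s` at `0` yields the
total time derivative of the generator (`T'` resp. `X'`): both are the second derivative of the
`C²` map `h` applied to `(0, 0, 1)` and `(1, ẋ, 0)`, in the two possible orders, and these agree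
by symmetry of the second Fréchet derivative. Since the denominator is `1` at `0`,
`q' = X' - T' • ẋ`.
-/

open ContinuousLinearMap

section

variable {E F G : Type*} [NormedAddCommGroup E] [NormedSpace ℝ E]
  [NormedAddCommGroup F] [NormedSpace ℝ F] [NormedAddCommGroup G] [NormedSpace ℝ G]

section Partials

variable {f : ℝ × E × F → G} {f' : ℝ × E × F →L[ℝ] G} {t : ℝ} {y : E} {v : F}

theorem HasFDerivAt.hasDerivAt_slice_fst (hf : HasFDerivAt f f' (t, y, v)) :
    HasDerivAt (fun τ => f (τ, y, v)) (f' (1, 0, 0)) t :=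
  hf.comp_hasDerivAt t ((hasDerivAt_id t).prodMk (hasDerivAt_const t (y, v)))

theorem HasFDerivAt.hasFDerivAt_slice_snd (hf : HasFDerivAt f f' (t, y, v)) :
    HasFDerivAt (fun y' => f (t, y', v)) (f'.comp ((inr ℝ ℝ (E × F)).comp (inl ℝ E F))) y :=
  hf.comp y ((hasFDerivAt_prodMk_right t (y, v)).comp y (hasFDerivAt_prodMk_left y v))

theorem HasFDerivAt.hasFDerivAt_slice_thd (hf : HasFDerivAt f f' (t, y, v)) :
    HasFDerivAt (fun v' => f (t, y, v')) (f'.comp ((inr ℝ ℝ (E × F)).comp (inr ℝ E F))) v :=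
  hf.comp v ((hasFDerivAt_prodMk_right t (y, v)).comp v (hasFDerivAt_prodMk_right y v))

theorem fderiv_apply_eq_sum_partials (hf : DifferentiableAt ℝ f (t, y, v)) (c : ℝ) (w : E)
    (u : F) :
    fderiv ℝ f (t, y, v) (c, w, u) = c • deriv (fun τ => f (τ, y, v)) t
      + fderiv ℝ (fun y' => f (t, y', v)) y w + fderiv ℝ (fun v' => f (t, y, v')) v u := by
  have hf' := hf.hasFDerivAt
  rw [hf'.hasDerivAt_slice_fst.deriv, hf'.hasFDerivAt_slice_snd.fderiv,
    hf'.hasFDerivAt_slice_thd.fderiv, ← map_smul]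
  simp only [comp_apply, inl_apply, inr_apply, ← map_add]
  congr 1
  simp

end Partials

theorem HasDerivAt.inv_smul_of_eq_one {c : ℝ → ℝ} {d : ℝ → G} {c' s : ℝ} {d' : G}
    (hc : HasDerivAt c c' s) (hd : HasDerivAt d d' s) (hcs : c s = 1) :
    HasDerivAt (fun s => (c s)⁻¹ • d s) (d' - c' • d s) s := by
  convert (hc.inv (by simp [hcs])).smul hd using 1
  · rfl
  · rw [Pi.inv_apply, hcs]
    module

theorem hasDerivAt_deriv_add_fderiv_of_contDiff {F : ℝ × E × ℝ → G} (hF : ContDiff ℝ 2 F)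
    (t s₀ : ℝ) (y w : E) :
    HasDerivAt (fun s => deriv (fun τ => F (τ, y, s)) t + fderiv ℝ (fun y' => F (t, y', s)) y w)
      (deriv (fun τ => deriv (fun s => F (τ, y, s)) s₀) t
        + fderiv ℝ (fun y' => deriv (fun s => F (t, y', s)) s₀) y w) s₀ := by
  have hF1 : Differentiable ℝ F := hF.differentiable two_ne_zero
  have hF2 : Differentiable ℝ (fderiv ℝ F) :=
    (hF.fderiv_right le_rfl).differentiable one_ne_zero
  set F'' := fderiv ℝ (fderiv ℝ F) (t, y, s₀)
  have hsymm : IsSymmSndFDerivAt ℝ F (t, y, s₀) := hF.contDiffAt.isSymmSndFDerivAt (by simp)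
  have hpartial_s :
      ∀ τ y' s, deriv (fun s => F (τ, y', s)) s = fderiv ℝ F (τ, y', s) (0, 0, 1) := by
    intro τ y' s
    simp [fderiv_apply_eq_sum_partials (hF1 _)]
  have hlhs : (fun s => deriv (fun τ => F (τ, y, s)) t + fderiv ℝ (fun y' => F (t, y', s)) y w)
      = fun s => fderiv ℝ F (t, y, s) (1, w, 0) := by
    funext s
    simp [fderiv_apply_eq_sum_partials (hF1 _)]
  have hrhs : deriv (fun τ => deriv (fun s => F (τ, y, s)) s₀) t
      + fderiv ℝ (fun y' => deriv (fun s => F (t, y', s)) s₀) y w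
      = F'' (1, w, 0) (0, 0, 1) := by
    have hS :
        HasFDerivAt (fun p => fderiv ℝ F p (0, 0, 1)) (F''.flip (0, 0, 1)) (t, y, s₀) := by
      simpa using
        (hF2 _).hasFDerivAt.clm_apply (hasFDerivAt_const ((0 : ℝ), (0 : E), (1 : ℝ)) _)
    simp only [hpartial_s]
    simpa [hS.fderiv] using (fderiv_apply_eq_sum_partials hS.differentiableAt 1 w 0).symm
  rw [hlhs, hrhs, hsymm]
  exact (hF2 _).hasFDerivAt.hasFDerivAt_slice_thd.hasDerivAt.clm_apply (hasDerivAt_const _ _)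
    |>.congr_deriv (by simp)

end

theorem invariance_necessary_sufficient_general
    {E : Type*} [NormedAddCommGroup E] [NormedSpace ℝ E]
    (L : ℝ × E × E → ℝ) (hL : ContDiff ℝ 2 L)
    (ht : ℝ → E → ℝ → ℝ) (hx : ℝ → E → ℝ → E)
    (hht : ContDiff ℝ 2 (fun p : ℝ × E × ℝ => ht p.1 p.2.1 p.2.2))
    (hhx : ContDiff ℝ 2 (fun p : ℝ × E × ℝ => hx p.1 p.2.1 p.2.2))
    (hht0 : ∀ (τ : ℝ) (y : E), ht τ y 0 = τ)
    (hhx0 : ∀ (τ : ℝ) (y : E), hx τ y 0 = y)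
    (T : ℝ → E → ℝ) (X : ℝ → E → E)
    (hT : ∀ (τ : ℝ) (y : E), T τ y = deriv (fun s => ht τ y s) 0)
    (hX : ∀ (τ : ℝ) (y : E), X τ y = deriv (fun s => hx τ y s) 0)
    (x x' : ℝ → E)
    (t : ℝ)
    (Tdot : ℝ) (Xdot : E)
    (hTdot : Tdot = deriv (fun τ => T τ (x t)) t + fderiv ℝ (fun y => T t y) (x t) (x' t))
    (hXdot : Xdot = deriv (fun τ => X τ (x t)) t + fderiv ℝ (fun y => X t y) (x t) (x' t)) :
    HasDerivAt
      (fun s : ℝ =>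
        L (ht t (x t) s, hx t (x t) s,
            (deriv (fun τ => ht τ (x t) s) t
              + fderiv ℝ (fun y => ht t y s) (x t) (x' t))⁻¹ •
            (deriv (fun τ => hx τ (x t) s) t
              + fderiv ℝ (fun y => hx t y s) (x t) (x' t)))
          * (deriv (fun τ => ht τ (x t) s) t
              + fderiv ℝ (fun y => ht t y s) (x t) (x' t)))
      0 0
    ↔
    deriv (fun τ => L (τ, x t, x' t)) t * T t (x t)
      + fderiv ℝ (fun y => L (t, y, x' t)) (x t) (X t (x t))
      + fderiv ℝ (fun v => L (t, x t, v)) (x' t) (Xdot - Tdot • x' t)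
      + L (t, x t, x' t) * Tdot = 0 := by
  have hden0 :
      deriv (fun τ => ht τ (x t) 0) t + fderiv ℝ (fun y => ht t y 0) (x t) (x' t) = 1 := by
    simp [hht0]
  have hnum0 :
      deriv (fun τ => hx τ (x t) 0) t + fderiv ℝ (fun y => hx t y 0) (x t) (x' t) = x' t := by
    simp [hhx0]
  have hden : HasDerivAt (fun s => deriv (fun τ => ht τ (x t) s) t
      + fderiv ℝ (fun y => ht t y s) (x t) (x' t)) Tdot 0 := by
    simpa only [hTdot, hT] using hasDerivAt_deriv_add_fderiv_of_contDiff hht t 0 (x t) (x' t)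
  have hnum : HasDerivAt (fun s => deriv (fun τ => hx τ (x t) s) t
      + fderiv ℝ (fun y => hx t y s) (x t) (x' t)) Xdot 0 := by
    simpa only [hXdot, hX] using hasDerivAt_deriv_add_fderiv_of_contDiff hhx t 0 (x t) (x' t)
  have hgenT : HasDerivAt (fun s => ht t (x t) s) (T t (x t)) 0 := by
    rw [hT]
    exact (hht.differentiable two_ne_zero _).hasFDerivAt.hasFDerivAt_slice_thd
      |>.differentiableAt.hasDerivAt
  have hgenX : HasDerivAt (fun s => hx t (x t) s) (X t (x t)) 0 := by
    rw [hX]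
    exact (hhx.differentiable two_ne_zero _).hasFDerivAt.hasFDerivAt_slice_thd
      |>.differentiableAt.hasDerivAt
  have hquot := hden.inv_smul_of_eq_one hnum hden0
  rw [hnum0] at hquot
  have hγ := hgenT.prodMk (hgenX.prodMk hquot)
  have hγ0 : (ht t (x t) 0, hx t (x t) 0,
      (deriv (fun τ => ht τ (x t) 0) t + fderiv ℝ (fun y => ht t y 0) (x t) (x' t))⁻¹ •
      (deriv (fun τ => hx τ (x t) 0) t + fderiv ℝ (fun y => hx t y 0) (x t) (x' t)))
      = (t, x t, x' t) := by
    rw [hht0, hhx0, hden0, hnum0, inv_one, one_smul]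
  have hφ := ((hL.differentiable two_ne_zero _).hasFDerivAt.comp_hasDerivAt_of_eq 0 hγ
    hγ0.symm).mul hden
  rw [Function.comp_apply, hγ0, hden0, mul_one,
    fderiv_apply_eq_sum_partials (hL.differentiable two_ne_zero _),
    smul_eq_mul, mul_comm (T t (x t))] at hφ
  exact ⟨hφ.unique, fun h => h ▸ hφ⟩

/-- **Necessary and sufficient condition of invariance.**
Let `L : ℝ × E × E → ℝ` be twice continuously Fréchet differentiable, and let
`ht : ℝ × E × ℝ → ℝ`, `hx : ℝ × E × ℝ → E` (written curried) be twice
continuously Fréchet differentiable families of transformations with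
`ht(t,y,0) = t` and `hx(t,y,0) = y`, generators
`T(t,y) = ∂ₛht(t,y,0)`, `X(t,y) = ∂ₛhx(t,y,0)`. Fix `x ∈ C¹([a,b];E)` and
`t ∈ [a,b]`, and set `T' = ∂ₜT(t,x t) + D_yT(t,x t)(ẋ t)`,
`X' = ∂ₜX(t,x t) + D_yX(t,x t)(ẋ t)`. Then the function
`φ(s) = L(ht(t,x,s), hx(t,x,s), [∂ₜhx + D_yhx(ẋ)]/[∂ₜht + D_yht(ẋ)]) · (∂ₜht + D_yht(ẋ))`
is differentiable at `s = 0` with `φ'(0) = 0` if and only if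
`∂ₜL·T + D_xL(X) + D_vL(X' − T'·ẋ) + L·T' = 0` at `(t, x t, ẋ t)`. -/
theorem invariance_necessary_sufficient
    {E : Type*} [NormedAddCommGroup E] [NormedSpace ℝ E] [CompleteSpace E]
    (a b : ℝ) (hab : a < b)
    (L : ℝ × E × E → ℝ) (hL : ContDiff ℝ 2 L)
    (ht : ℝ → E → ℝ → ℝ) (hx : ℝ → E → ℝ → E)
    (hht : ContDiff ℝ 2 (fun p : ℝ × E × ℝ => ht p.1 p.2.1 p.2.2))
    (hhx : ContDiff ℝ 2 (fun p : ℝ × E × ℝ => hx p.1 p.2.1 p.2.2))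
    (hht0 : ∀ (τ : ℝ) (y : E), ht τ y 0 = τ)
    (hhx0 : ∀ (τ : ℝ) (y : E), hx τ y 0 = y)
    (T : ℝ → E → ℝ) (X : ℝ → E → E)
    (hT : ∀ (τ : ℝ) (y : E), T τ y = deriv (fun s => ht τ y s) 0)
    (hX : ∀ (τ : ℝ) (y : E), X τ y = deriv (fun s => hx τ y s) 0)
    (x x' : ℝ → E)
    (hx1 : ∀ τ ∈ Set.Icc a b, HasDerivWithinAt x (x' τ) (Set.Icc a b) τ)
    (hx1' : ContinuousOn x' (Set.Icc a b))
    (t : ℝ) (htt : t ∈ Set.Icc a b)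
    (Tdot : ℝ) (Xdot : E)
    (hTdot : Tdot = deriv (fun τ => T τ (x t)) t + fderiv ℝ (fun y => T t y) (x t) (x' t))
    (hXdot : Xdot = deriv (fun τ => X τ (x t)) t + fderiv ℝ (fun y => X t y) (x t) (x' t)) :
    HasDerivAt
      (fun s : ℝ =>
        L (ht t (x t) s, hx t (x t) s,
            (deriv (fun τ => ht τ (x t) s) t
              + fderiv ℝ (fun y => ht t y s) (x t) (x' t))⁻¹ •
            (deriv (fun τ => hx τ (x t) s) t
              + fderiv ℝ (fun y => hx t y s) (x t) (x' t)))
          * (deriv (fun τ => ht τ (x t) s) t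
              + fderiv ℝ (fun y => ht t y s) (x t) (x' t)))
      0 0
    ↔
    deriv (fun τ => L (τ, x t, x' t)) t * T t (x t)
      + fderiv ℝ (fun y => L (t, y, x' t)) (x t) (X t (x t))
      + fderiv ℝ (fun v => L (t, x t, v)) (x' t) (Xdot - Tdot • x' t)
      + L (t, x t, x' t) * Tdot = 0 :=
  invariance_necessary_sufficient_general L hL ht hx hht hhx hht0 hhx0 T X hT hX x x' t Tdot Xdot
    hTdot hXdot
end

section
/- Let E be a real Banach space, a < b, and L : ℝ × E × E → ℝ twice continuously Fréchet differentiable. Define the Hamiltonian H(t,y,v) = −L(t,y,v) + D_vL(t,y,v)(v). Let T : ℝ × E → ℝ and X : ℝ × E → E be continuously Fréchet differentiable, and let x ∈ C²([a,b];E) be a solution of the Euler–Lagrange equation d/dt [ D_vL(t,x(t),ẋ(t)) ] = D_xL(t,x(t),ẋ(t)) on [a,b]. Write T'(t) = ∂_tT(t,x(t)) + D_yT(t,x(t))(ẋ(t)) and X'(t) = ∂_tX(t,x(t)) + D_yX(t,x(t))(ẋ(t)), and assume that for every t ∈ [a,b], ∂_tL(t,x(t),ẋ(t))·T(t,x(t))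 + D_xL(t,x(t),ẋ(t))(X(t,x(t))) + D_vL(t,x(t),ẋ(t))( X'(t) − T'(t)·ẋ(t) ) + L(t,x(t),ẋ(t))·T'(t) = 0. Then the function t ↦ D_vL(t,x(t),ẋ(t))(X(t,x(t))) − H(t,x(t),ẋ(t))·T(t,x(t)) is constant on [a,b]. -/
/-!
Along the curve, the Euler–Lagrange equation says that the momentum `p = D_vL(t,x,ẋ)` has
derivative `D_xL(t,x,ẋ)`. Differentiating `p(X) + (L - p(ẋ))·T` by the product rule, the
terms `D_xL(ẋ)·T` and `D_vL(ẍ)·T` coming from `d/dt L(t,x,ẋ)` cancel against those of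
`d/dt p(ẋ)`, and what remains is exactly the left-hand side of the invariance identity,
hence zero.
-/

open Set ContinuousLinearMap

section

variable {E F G : Type*} [NormedAddCommGroup E] [NormedSpace ℝ E]
  [NormedAddCommGroup F] [NormedSpace ℝ F] [NormedAddCommGroup G] [NormedSpace ℝ G]

theorem fderiv_prod_apply_eq_add {g : E × F → G} {p : E × F} (hg : DifferentiableAt ℝ g p)
    (w : E) (u : F) :
    fderiv ℝ g p (w, u) =
      fderiv ℝ (fun z => g (z, p.2)) p.1 w + fderiv ℝ (fun z => g (p.1, z)) p.2 u := by
  have hleft : HasFDerivAt (fun z => g (z, p.2)) ((fderiv ℝ g p).comp (inl ℝ E F)) p.1 :=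
    hg.hasFDerivAt.comp p.1 (hasFDerivAt_prodMk_left p.1 p.2)
  have hright : HasFDerivAt (fun z => g (p.1, z)) ((fderiv ℝ g p).comp (inr ℝ E F)) p.2 :=
    hg.hasFDerivAt.comp p.2 (hasFDerivAt_prodMk_right p.1 p.2)
  rw [hleft.fderiv, hright.fderiv, comp_apply, comp_apply, ← map_add, inl_apply, inr_apply,
    Prod.mk_add_mk, add_zero, zero_add]

theorem DifferentiableAt.hasDerivWithinAt_comp_graph {f : ℝ × F → G} {c : ℝ → F} {c' : F}
    {s : Set ℝ} {t : ℝ} (hf : DifferentiableAt ℝ f (t, c t)) (hc : HasDerivWithinAt c c' s t) :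
    HasDerivWithinAt (fun τ => f (τ, c τ))
      (deriv (fun τ => f (τ, c t)) t + fderiv ℝ (fun y => f (t, y)) (c t) c') s t := by
  have hchain := hf.hasFDerivAt.comp_hasDerivWithinAt t ((hasDerivWithinAt_id t s).prodMk hc)
  rwa [fderiv_prod_apply_eq_add hf] at hchain

theorem DifferentiableAt.hasDerivWithinAt_lagrangian_comp {L : ℝ × E × E → ℝ} {x x' : ℝ → E}
    {x'' : E} {s : Set ℝ} {t : ℝ} (hL : DifferentiableAt ℝ L (t, x t, x' t))
    (hx : HasDerivWithinAt x (x' t) s t) (hx' : HasDerivWithinAt x' x'' s t) :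
    HasDerivWithinAt (fun τ => L (τ, x τ, x' τ))
      (deriv (fun τ => L (τ, x t, x' t)) t + fderiv ℝ (fun y => L (t, y, x' t)) (x t) (x' t)
        + fderiv ℝ (fun v => L (t, x t, v)) (x' t) x'') s t := by
  have hLt : DifferentiableAt ℝ (fun q : E × E => L (t, q)) (x t, x' t) :=
    hL.comp _ (hasFDerivAt_prodMk_right t (x t, x' t)).differentiableAt
  have hchain := hL.hasDerivWithinAt_comp_graph (hx.prodMk hx')
  rwa [fderiv_prod_apply_eq_add hLt, ← add_assoc] at hchain

theorem hasDerivWithinAt_noether_charge {L : ℝ × E × E → ℝ} {x x' ξ : ℝ → E} {θ : ℝ → ℝ}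
    {x'' ξ' : E} {θ' : ℝ} {s : Set ℝ} {t : ℝ} (hL : DifferentiableAt ℝ L (t, x t, x' t))
    (hx : HasDerivWithinAt x (x' t) s t) (hx' : HasDerivWithinAt x' x'' s t)
    (hξ : HasDerivWithinAt ξ ξ' s t) (hθ : HasDerivWithinAt θ θ' s t)
    (hEL : HasDerivWithinAt (fun τ => fderiv ℝ (fun v => L (τ, x τ, v)) (x' τ))
      (fderiv ℝ (fun y => L (t, y, x' t)) (x t)) s t) :
    HasDerivWithinAt
      (fun τ => fderiv ℝ (fun v => L (τ, x τ, v)) (x' τ) (ξ τ)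
        - (-L (τ, x τ, x' τ) + fderiv ℝ (fun v => L (τ, x τ, v)) (x' τ) (x' τ)) * θ τ)
      (deriv (fun τ => L (τ, x t, x' t)) t * θ t
        + fderiv ℝ (fun y => L (t, y, x' t)) (x t) (ξ t)
        + fderiv ℝ (fun v => L (t, x t, v)) (x' t) (ξ' - θ' • x' t)
        + L (t, x t, x' t) * θ') s t := by
  have hcharge := (hEL.clm_apply hξ).fun_sub
    (((hL.hasDerivWithinAt_lagrangian_comp hx hx').fun_neg.fun_add (hEL.clm_apply hx')).fun_mul hθ)
  refine hcharge.congr_deriv ?_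
  rw [map_sub, map_smul, smul_eq_mul]
  ring

theorem eq_left_of_hasDerivWithinAt_Icc_zero {f : ℝ → F}
    {a b : ℝ} (hf : ∀ t ∈ Icc a b, HasDerivWithinAt f 0 (Icc a b) t) :
    ∀ t ∈ Icc a b, f t = f a :=
  constant_of_has_deriv_right_zero (fun t ht => (hf t ht).continuousWithinAt) fun t ht =>
    (hf t (Ico_subset_Icc_self ht)).mono_of_mem_nhdsWithin (Icc_mem_nhdsGE_of_mem ht)

end

theorem noether_hamiltonian_form_general
    {E : Type*} [NormedAddCommGroup E] [NormedSpace ℝ E]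
    (a b : ℝ)
    (L : ℝ × E × E → ℝ) (hL : ContDiff ℝ 2 L)
    (H : ℝ → E → E → ℝ)
    (hH : ∀ (t : ℝ) (y v : E), H t y v = -L (t, y, v) + fderiv ℝ (fun u => L (t, y, u)) v v)
    (T : ℝ → E → ℝ) (X : ℝ → E → E)
    (hT : ContDiff ℝ 1 (fun p : ℝ × E => T p.1 p.2))
    (hX : ContDiff ℝ 1 (fun p : ℝ × E => X p.1 p.2))
    (x x' x'' : ℝ → E)
    (hx : ∀ t ∈ Set.Icc a b, HasDerivWithinAt x (x' t) (Set.Icc a b) t)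
    (hx' : ∀ t ∈ Set.Icc a b, HasDerivWithinAt x' (x'' t) (Set.Icc a b) t)
    (hEL : ∀ t ∈ Set.Icc a b,
      HasDerivWithinAt (fun τ => fderiv ℝ (fun v => L (τ, x τ, v)) (x' τ))
        (fderiv ℝ (fun y => L (t, y, x' t)) (x t)) (Set.Icc a b) t)
    (hinv : ∀ t ∈ Set.Icc a b,
      deriv (fun τ => L (τ, x t, x' t)) t * T t (x t)
        + fderiv ℝ (fun y => L (t, y, x' t)) (x t) (X t (x t))
        + fderiv ℝ (fun v => L (t, x t, v)) (x' t)
            ((deriv (fun τ => X τ (x t)) t + fderiv ℝ (fun y => X t y) (x t) (x' t))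
              - (deriv (fun τ => T τ (x t)) t
                  + fderiv ℝ (fun y => T t y) (x t) (x' t)) • x' t)
        + L (t, x t, x' t)
            * (deriv (fun τ => T τ (x t)) t + fderiv ℝ (fun y => T t y) (x t) (x' t))
        = 0) :
    ∃ c : ℝ, ∀ t ∈ Set.Icc a b,
      fderiv ℝ (fun v => L (t, x t, v)) (x' t) (X t (x t))
        - H t (x t) (x' t) * T t (x t) = c := by
  have hLd : Differentiable ℝ L := hL.differentiable (by norm_num)
  have hTd : Differentiable ℝ (fun p : ℝ × E => T p.1 p.2) := hT.differentiable (by norm_num)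
  have hXd : Differentiable ℝ (fun p : ℝ × E => X p.1 p.2) := hX.differentiable (by norm_num)
  have hconserved : ∀ t ∈ Icc a b, HasDerivWithinAt
      (fun τ => fderiv ℝ (fun v => L (τ, x τ, v)) (x' τ) (X τ (x τ))
        - H τ (x τ) (x' τ) * T τ (x τ)) 0 (Icc a b) t := by
    intro t ht
    simp only [hH]
    rw [← hinv t ht]
    exact hasDerivWithinAt_noether_charge (hLd _) (hx t ht) (hx' t ht)
      ((hXd _).hasDerivWithinAt_comp_graph (hx t ht))
      ((hTd _).hasDerivWithinAt_comp_graph (hx t ht)) (hEL t ht)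
  exact ⟨_, eq_left_of_hasDerivWithinAt_Icc_zero hconserved⟩

/-- **Noether's theorem, Hamiltonian form.**
With the Hamiltonian `H(t,y,v) = −L(t,y,v) + D_vL(t,y,v)(v)`, under the same
hypotheses as Noether's theorem (Euler–Lagrange equation and invariance
identity along `x ∈ C²([a,b];E)`), the function
`t ↦ D_vL(t,x,ẋ)(X(t,x)) − H(t,x,ẋ)·T(t,x)` is constant on `[a,b]`. -/
theorem noether_hamiltonian_form
    {E : Type*} [NormedAddCommGroup E] [NormedSpace ℝ E] [CompleteSpace E]
    (a b : ℝ) (hab : a < b)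
    (L : ℝ × E × E → ℝ) (hL : ContDiff ℝ 2 L)
    (H : ℝ → E → E → ℝ)
    (hH : ∀ (t : ℝ) (y v : E), H t y v = -L (t, y, v) + fderiv ℝ (fun u => L (t, y, u)) v v)
    (T : ℝ → E → ℝ) (X : ℝ → E → E)
    (hT : ContDiff ℝ 1 (fun p : ℝ × E => T p.1 p.2))
    (hX : ContDiff ℝ 1 (fun p : ℝ × E => X p.1 p.2))
    (x x' x'' : ℝ → E)
    (hx : ∀ t ∈ Set.Icc a b, HasDerivWithinAt x (x' t) (Set.Icc a b) t)
    (hx' : ∀ t ∈ Set.Icc a b, HasDerivWithinAt x' (x'' t) (Set.Icc a b) t)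
    (hx'' : ContinuousOn x'' (Set.Icc a b))
    (hEL : ∀ t ∈ Set.Icc a b,
      HasDerivWithinAt (fun τ => fderiv ℝ (fun v => L (τ, x τ, v)) (x' τ))
        (fderiv ℝ (fun y => L (t, y, x' t)) (x t)) (Set.Icc a b) t)
    (hinv : ∀ t ∈ Set.Icc a b,
      deriv (fun τ => L (τ, x t, x' t)) t * T t (x t)
        + fderiv ℝ (fun y => L (t, y, x' t)) (x t) (X t (x t))
        + fderiv ℝ (fun v => L (t, x t, v)) (x' t)
            ((deriv (fun τ => X τ (x t)) t + fderiv ℝ (fun y => X t y) (x t) (x' t))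
              - (deriv (fun τ => T τ (x t)) t
                  + fderiv ℝ (fun y => T t y) (x t) (x' t)) • x' t)
        + L (t, x t, x' t)
            * (deriv (fun τ => T τ (x t)) t + fderiv ℝ (fun y => T t y) (x t) (x' t))
        = 0) :
    ∃ c : ℝ, ∀ t ∈ Set.Icc a b,
      fderiv ℝ (fun v => L (t, x t, v)) (x' t) (X t (x t))
        - H t (x t) (x' t) * T t (x t) = c :=
  noether_hamiltonian_form_general a b L hL H hH T X hT hX x x' x'' hx hx' hEL hinv
end
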